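/- arXiv:math/0408176 — 5 statements merged into one kernel-verified Lean document; each statement's English description precedes it below -/
import Mathlib

section
/- Let s be a vertex of G, let A and B be increasing events determined by the open cluster of s, and let X ⊆ V \ {s} with Pr(R_X) > 0. Then Pr(A ∩ B | R_X) ≥ Pr(A | R_X) · Pr(B | R_X); that is, conditioned on the event that s has no open path to any vertex of X, the events A and B are positively correlated. -/
/-!
Bond percolation on a finite graph `G = (V, E)`.
Edges are given by their endpoints `ends : E → V × V` (unordered: a path may
traverse an edge in either direction).  Each edge `e` is independently open
(`ω e = true`) with probability `p e`; `Pr` is the resulting product measure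
on configurations `ω : E → Bool`.
-/

attribute [local instance] Classical.propDecidable

namespace BondPerc

variable {V E : Type*}

/-- One step along an open edge (in either direction, since edges are undirected). -/
def Step (ends : E → V × V) (ω : E → Bool) (u v : V) : Prop :=
  ∃ e, ω e = true ∧ (ends e = (u, v) ∨ ends e = (v, u))

/-- `Reach ends ω u v` : there is an open path from `u` to `v` in configuration `ω`. -/
def Reach (ends : E → V × V) (ω : E → Bool) (u v : V) : Prop :=
  Relation.ReflTransGen (Step ends ω) u v

/-- The open cluster `C_s(ω)` of `s`: the set of edges lying on some open path
starting at `s`, i.e. open edges one of whose endpoints is joined to `s` by an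
open path. -/
def Cluster (ends : E → V × V) (s : V) (ω : E → Bool) : Set E :=
  {e | ω e = true ∧ (Reach ends ω s (ends e).1 ∨ Reach ends ω s (ends e).2)}

/-- `R_X`: the event that `s` has an open path to no vertex of `X`. -/
def RX (ends : E → V × V) (s : V) (X : Set V) : Set (E → Bool) :=
  {ω | ∀ x ∈ X, ¬ Reach ends ω s x}

/-- The probability of a single configuration under the product measure. -/
noncomputable def weight [Fintype E] (p : E → ℝ) (ω : E → Bool) : ℝ :=
  ∏ e, if ω e then p e else 1 - p e

/-- The probability of an event `A ⊆ {0,1}^E`. -/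
noncomputable def Pr [Fintype E] [DecidableEq E] (p : E → ℝ) (A : Set (E → Bool)) : ℝ :=
  ∑ ω : E → Bool, A.indicator (weight p) ω

/-- Conditional probability `Pr(A | B)`. -/
noncomputable def condPr [Fintype E] [DecidableEq E] (p : E → ℝ)
    (A B : Set (E → Bool)) : ℝ :=
  Pr p (A ∩ B) / Pr p B

/-- Conditional expectation `E[f | B]`. -/
noncomputable def condExp [Fintype E] [DecidableEq E] (p : E → ℝ)
    (f : (E → Bool) → ℝ) (B : Set (E → Bool)) : ℝ :=
  (∑ ω : E → Bool, B.indicator (fun ω' => weight p ω' * f ω') ω) / Pr p B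

/-!
The proof runs by induction on the set `F` of edges that are still random, in a more flexible
model: besides the random edges there are permanently open links `D`, and instead of the single
vertex `s` a set `S ∋ s` of sources must avoid `X`. Writing `R_S` for that avoidance event, two
inequalities are proved together for increasing events `A`, `B` determined by the cluster of `s`:

* `P(A ∩ R_S) P(B ∩ R_S) ≤ P(A ∩ B ∩ R_S) P(R_S)` (Harris inequality given `R_S`);
* `P(A ∩ R_S) P(R_{S ∪ {a}}) ≤ P(A ∩ R_{S ∪ {a}}) P(R_S)` (more sources avoiding `X` make `A`
  likelier).

If no random edge touches the `D`-component of `s`, the cluster of `s` is empty and `A` is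
trivial. Otherwise pivot on such an edge `{u, b}` with `u` linked to `s`: closing it deletes it,
and opening it amounts to adding `b` to the sources. Each half satisfies the inequalities for
`F \ {e}`, and what remains is a cross term. For the Harris inequality it is controlled by
monotonicity in the sources. For monotonicity it needs the supermodularity
`P(R_{S∪{a}}) P(R_{S∪{b}}) ≤ P(R_{S∪{a,b}}) P(R_S)`, which is the Harris inequality for the
complements of the increasing events `{x ↔ a}`, `{x ↔ b}` once `X` is glued into one source `x`.
-/

section Connectivity

variable (F : Finset E) (D : V → V → Prop) (ends : E → V × V)

def LinkIn (ω : E → Bool) (u v : V) : Prop :=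
  D u v ∨ D v u ∨ ∃ e ∈ F, ω e = true ∧ (ends e = (u, v) ∨ ends e = (v, u))

def ConnIn (ω : E → Bool) : V → V → Prop :=
  Relation.ReflTransGen (LinkIn F D ends ω)

def clusterIn (s : V) (ω : E → Bool) : Set E :=
  {e | e ∈ F ∧ ω e = true ∧ (ConnIn F D ends ω s (ends e).1 ∨ ConnIn F D ends ω s (ends e).2)}

def avoidIn (S X : Set V) : Set (E → Bool) :=
  {ω | ∀ u ∈ S, ∀ x ∈ X, ¬ ConnIn F D ends ω u x}

def IsIncrClusterEvent (s : V) (A : Set (E → Bool)) : Prop :=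
  ∀ ω ∈ A, ∀ ω', clusterIn F D ends s ω ⊆ clusterIn F D ends s ω' → ω' ∈ A

def LinkConn : V → V → Prop :=
  Relation.ReflTransGen fun u v => D u v ∨ D v u

def addLink (uv : V × V) : V → V → Prop :=
  fun a b => D a b ∨ (a, b) = uv

def addStar (x₀ : V) (X : Set V) : V → V → Prop :=
  fun a b => D a b ∨ (a = x₀ ∧ b ∈ X)

variable {F D ends} {ω ω' : E → Bool} {s u v : V}

lemma LinkIn.symm (h : LinkIn F D ends ω u v) : LinkIn F D ends ω v u := by
  rcases h with h | h | ⟨e, he, hω, h⟩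
  exacts [Or.inr (Or.inl h), Or.inl h, Or.inr (Or.inr ⟨e, he, hω, h.symm⟩)]

lemma ConnIn.symm (h : ConnIn F D ends ω u v) : ConnIn F D ends ω v u :=
  haveI : Std.Symm (LinkIn F D ends ω) := ⟨fun _ _ => LinkIn.symm⟩
  Std.Symm.symm (r := Relation.ReflTransGen (LinkIn F D ends ω)) _ _ h

lemma ConnIn.mono_links {D' : V → V → Prop} (hD : ∀ u v, D u v → D' u v)
    (h : ConnIn F D ends ω u v) : ConnIn F D' ends ω u v :=
  Relation.ReflTransGen.mono (fun _ _ => Or.imp (hD _ _) (Or.imp (hD _ _) id)) _ _ h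

lemma ConnIn.mono_config (hω : ∀ e, ω e = true → ω' e = true)
    (h : ConnIn F D ends ω u v) : ConnIn F D ends ω' u v :=
  Relation.ReflTransGen.mono
    (fun _ _ => Or.imp id <| Or.imp id fun ⟨e, he, h₁, h₂⟩ => ⟨e, he, hω e h₁, h₂⟩) _ _ h

lemma LinkConn.connIn (h : LinkConn D s u) (ω : E → Bool) : ConnIn F D ends ω s u :=
  Relation.ReflTransGen.mono (fun _ _ => Or.imp id Or.inl) _ _ h

lemma clusterIn_mono_config (hω : ∀ e, ω e = true → ω' e = true) :
    clusterIn F D ends s ω ⊆ clusterIn F D ends s ω' :=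
  fun e ⟨he, h₁, h₂⟩ => ⟨he, hω e h₁, h₂.imp (.mono_config hω) (.mono_config hω)⟩

lemma ConnIn.of_clusterIn_subset (hC : clusterIn F D ends s ω ⊆ clusterIn F D ends s ω')
    (h : ConnIn F D ends ω s v) : ConnIn F D ends ω' s v := by
  induction h with
  | refl => exact .refl
  | @tail b c hsb hbc ih =>
    refine ih.tail ?_
    rcases hbc with h | h | ⟨e, he, hω, hends⟩
    · exact Or.inl h
    · exact Or.inr (Or.inl h)
    · have hmem : e ∈ clusterIn F D ends s ω :=
        ⟨he, hω, by rcases hends with h | h <;> rw [h] <;> tauto⟩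
      exact Or.inr (Or.inr ⟨e, he, (hC hmem).2.1, hends⟩)

lemma avoidIn_anti_sources {S S' : Set V} (h : S ⊆ S') (X : Set V) :
    avoidIn F D ends S' X ⊆ avoidIn F D ends S X :=
  fun _ hω u hu => hω u (h hu)

end Connectivity

section Pivot

variable [DecidableEq E] {F : Finset E} {D : V → V → Prop} {ends : E → V × V} {e₀ : E}

def slice (e₀ : E) (b : Bool) (A : Set (E → Bool)) : Set (E → Bool) :=
  (Function.update · e₀ b) ⁻¹' A

lemma linkIn_update_false (ω : E → Bool) :
    LinkIn F D ends (Function.update ω e₀ false) = LinkIn (F.erase e₀) D ends ω := by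
  ext u v
  simp only [LinkIn, Finset.mem_erase, Function.update_apply]
  grind

lemma linkIn_update_true (he : e₀ ∈ F) (ω : E → Bool) :
    LinkIn F D ends (Function.update ω e₀ true)
      = LinkIn (F.erase e₀) (addLink D (ends e₀)) ends ω := by
  ext u v
  simp only [LinkIn, addLink, Finset.mem_erase, Function.update_apply]
  grind

lemma connIn_update_false (ω : E → Bool) :
    ConnIn F D ends (Function.update ω e₀ false) = ConnIn (F.erase e₀) D ends ω := by
  rw [ConnIn, linkIn_update_false]; rfl

lemma connIn_update_true (he : e₀ ∈ F) (ω : E → Bool) :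
    ConnIn F D ends (Function.update ω e₀ true)
      = ConnIn (F.erase e₀) (addLink D (ends e₀)) ends ω := by
  rw [ConnIn, linkIn_update_true he]; rfl

lemma slice_inter (b : Bool) (A B : Set (E → Bool)) :
    slice e₀ b (A ∩ B) = slice e₀ b A ∩ slice e₀ b B := rfl

lemma slice_univ (b : Bool) : slice e₀ b (Set.univ : Set (E → Bool)) = Set.univ := rfl

lemma slice_false_avoidIn (S X : Set V) :
    slice e₀ false (avoidIn F D ends S X) = avoidIn (F.erase e₀) D ends S X := by
  ext ω
  simp only [slice, avoidIn, Set.mem_preimage, Set.mem_ofPred_eq, connIn_update_false]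

lemma slice_true_avoidIn (he : e₀ ∈ F) (S X : Set V) :
    slice e₀ true (avoidIn F D ends S X)
      = avoidIn (F.erase e₀) (addLink D (ends e₀)) ends S X := by
  ext ω
  simp only [slice, avoidIn, Set.mem_preimage, Set.mem_ofPred_eq, connIn_update_true he]

lemma clusterIn_update_false (s : V) (ω : E → Bool) :
    clusterIn F D ends s (Function.update ω e₀ false) = clusterIn (F.erase e₀) D ends s ω := by
  ext e
  simp only [clusterIn, Set.mem_ofPred_eq, connIn_update_false, Finset.mem_erase,
    Function.update_apply]
  grind

lemma mem_clusterIn_update_true (he : e₀ ∈ F) {s : V} {ω : E → Bool} {e : E} :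
    e ∈ clusterIn F D ends s (Function.update ω e₀ true) ↔ e ∈ F ∧ (e = e₀ ∨ ω e = true) ∧
      (ConnIn (F.erase e₀) (addLink D (ends e₀)) ends ω s (ends e).1 ∨
        ConnIn (F.erase e₀) (addLink D (ends e₀)) ends ω s (ends e).2) := by
  simp only [clusterIn, Set.mem_ofPred_eq, connIn_update_true he, Function.update_apply]
  grind

variable {s : V} {A : Set (E → Bool)}

lemma IsIncrClusterEvent.slice_false (hA : IsIncrClusterEvent F D ends s A) :
    IsIncrClusterEvent (F.erase e₀) D ends s (slice e₀ false A) := by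
  intro ω hω ω' hsub
  exact hA _ hω _ (by rwa [clusterIn_update_false, clusterIn_update_false])

lemma IsIncrClusterEvent.slice_true (he : e₀ ∈ F) (hA : IsIncrClusterEvent F D ends s A) :
    IsIncrClusterEvent (F.erase e₀) (addLink D (ends e₀)) ends s (slice e₀ true A) := by
  intro ω hω ω' hsub
  refine hA _ hω _ fun e hmem => ?_
  obtain ⟨heF, hopen, hconn⟩ := (mem_clusterIn_update_true he).1 hmem
  refine (mem_clusterIn_update_true he).2
    ⟨heF, ?_, hconn.imp (.of_clusterIn_subset hsub) (.of_clusterIn_subset hsub)⟩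
  by_cases hne : e = e₀
  · exact Or.inl hne
  · have hmem' : e ∈ clusterIn (F.erase e₀) (addLink D (ends e₀)) ends s ω :=
      ⟨Finset.mem_erase.2 ⟨hne, heF⟩, hopen.resolve_left hne, hconn⟩
    exact Or.inr (hsub hmem').2.1

lemma IsIncrClusterEvent.slice_false_subset (hA : IsIncrClusterEvent F D ends s A) :
    slice e₀ false A ⊆ slice e₀ true A := by
  refine fun ω hω => hA (Function.update ω e₀ false) hω (Function.update ω e₀ true)
    (clusterIn_mono_config fun e h => ?_)
  by_cases hne : e = e₀
  · simp [hne]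
  · rwa [Function.update_of_ne hne] at h ⊢

end Pivot

section Absorption

variable {G : Finset E} {D : V → V → Prop} {ends : E → V × V} {ω : E → Bool} {e₀ : E}
  {u₀ b₀ : V}

lemma ConnIn.addLink_cases (hends : ends e₀ = (u₀, b₀) ∨ ends e₀ = (b₀, u₀)) {v w : V}
    (h : ConnIn G (addLink D (ends e₀)) ends ω v w) :
    ConnIn G D ends ω v w ∨ ConnIn G D ends ω u₀ w ∨ ConnIn G D ends ω b₀ w := by
  induction h with
  | refl => exact Or.inl .refl
  | @tail b c _ hbc ih =>
    have hstep : LinkIn G D ends ω b c ∨ c = u₀ ∨ c = b₀ := by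
      simp only [LinkIn, addLink] at hbc ⊢
      rcases hends with h | h <;> rw [h] at hbc <;> grind
    rcases hstep with h | rfl | rfl
    · exact ih.imp (·.tail h) (Or.imp (·.tail h) (·.tail h))
    · exact Or.inr (Or.inl .refl)
    · exact Or.inr (Or.inr .refl)

lemma avoidIn_addLink (hends : ends e₀ = (u₀, b₀) ∨ ends e₀ = (b₀, u₀)) {s : V}
    (hsu : LinkConn D s u₀) {S : Set V} (hs : s ∈ S) (X : Set V) :
    avoidIn G (addLink D (ends e₀)) ends S X = avoidIn G D ends (insert b₀ S) X := by
  ext ω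
  have hweak : ∀ {v w}, ConnIn G D ends ω v w → ConnIn G (addLink D (ends e₀)) ends ω v w :=
    .mono_links fun _ _ => Or.inl
  simp only [avoidIn, Set.mem_ofPred_eq, Set.forall_mem_insert]
  constructor
  · intro h
    refine ⟨fun x hx hb => h s hs x hx ?_, fun u hu x hx hr => h u hu x hx (hweak hr)⟩
    have hub : LinkIn G (addLink D (ends e₀)) ends ω u₀ b₀ := by
      rcases hends with h' | h'
      exacts [Or.inl (Or.inr h'.symm), Or.inr (Or.inl (Or.inr h'.symm))]
    exact ((hweak (hsu.connIn ω)).tail hub).trans (hweak hb)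
  · rintro ⟨hb, h⟩ u hu x hx hr
    rcases hr.addLink_cases hends with hr | hr | hr
    exacts [h u hu x hx hr, h s hs x hx ((hsu.connIn ω).trans hr), hb x hx hr]

end Absorption

section Star

variable {F : Finset E} {D : V → V → Prop} {ends : E → V × V} {ω : E → Bool} {x₀ : V}
  {X : Set V}

lemma connIn_addStar_iff (hx₀ : x₀ ∈ X) {t : V} :
    ConnIn F (addStar D x₀ X) ends ω x₀ t ↔ ∃ x ∈ X, ConnIn F D ends ω x t := by
  constructor
  · intro h
    induction h with
    | refl => exact ⟨x₀, hx₀, .refl⟩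
    | @tail b c _ hbc ih =>
      obtain ⟨x, hx, hxb⟩ := ih
      rcases hbc with (h | h) | (h | h) | h
      · exact ⟨x, hx, hxb.tail (Or.inl h)⟩
      · exact ⟨c, h.2, .refl⟩
      · exact ⟨x, hx, hxb.tail (Or.inr (Or.inl h))⟩
      · exact ⟨x₀, hx₀, h.1 ▸ .refl⟩
      · exact ⟨x, hx, hxb.tail (Or.inr (Or.inr h))⟩
  · rintro ⟨x, hx, h⟩
    exact .head (Or.inl (Or.inr ⟨rfl, hx⟩)) (h.mono_links fun _ _ => Or.inl)

lemma avoidIn_addStar (hx₀ : x₀ ∈ X) (T : Set V) :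
    avoidIn F (addStar D x₀ X) ends {x₀} T = avoidIn F D ends T X := by
  ext ω
  simp only [avoidIn, Set.mem_ofPred_eq, Set.mem_singleton_iff, forall_eq,
    connIn_addStar_iff hx₀]
  exact ⟨fun h t ht x hx hr => h t ht ⟨x, hx, hr.symm⟩,
    fun h t ht ⟨x, hx, hr⟩ => h t ht x hx hr.symm⟩

lemma avoidIn_singleton_insert (x₀ t : V) (T : Set V) :
    avoidIn F D ends {x₀} (insert t T)
      = {ω | ConnIn F D ends ω x₀ t}ᶜ ∩ avoidIn F D ends {x₀} T := by
  ext ω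
  simp [avoidIn]

end Star

lemma exists_pivot_or_stuck (F : Finset E) (D : V → V → Prop) (ends : E → V × V) (s : V) :
    (∃ e₀ ∈ F, ∃ u₀ b₀, (ends e₀ = (u₀, b₀) ∨ ends e₀ = (b₀, u₀)) ∧ LinkConn D s u₀) ∨
      ∀ e ∈ F, ¬ LinkConn D s (ends e).1 ∧ ¬ LinkConn D s (ends e).2 := by
  by_cases h : ∃ e ∈ F, LinkConn D s (ends e).1 ∨ LinkConn D s (ends e).2
  · obtain ⟨e₀, he₀, h | h⟩ := h
    exacts [Or.inl ⟨e₀, he₀, _, _, Or.inl rfl, h⟩, Or.inl ⟨e₀, he₀, _, _, Or.inr rfl, h⟩]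
  · exact Or.inr fun e he => not_or.1 fun h' => h ⟨e, he, h'⟩

section Stuck

variable {F : Finset E} {D : V → V → Prop} {ends : E → V × V} {s : V}

lemma ConnIn.linkConn_of_stuck
    (hstuck : ∀ e ∈ F, ¬ LinkConn D s (ends e).1 ∧ ¬ LinkConn D s (ends e).2)
    {ω : E → Bool} {v : V} (h : ConnIn F D ends ω s v) : LinkConn D s v := by
  induction h with
  | refl => exact .refl
  | @tail b c _ hbc ih =>
    rcases hbc with h | h | ⟨e, he, -, h | h⟩
    · exact ih.tail (Or.inl h)
    · exact ih.tail (Or.inr h)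
    · exact absurd (by rw [h]; exact ih) (hstuck e he).1
    · exact absurd (by rw [h]; exact ih) (hstuck e he).2

lemma clusterIn_eq_empty_of_stuck
    (hstuck : ∀ e ∈ F, ¬ LinkConn D s (ends e).1 ∧ ¬ LinkConn D s (ends e).2)
    (ω : E → Bool) : clusterIn F D ends s ω = ∅ :=
  Set.eq_empty_of_forall_notMem fun e ⟨he, _, h⟩ =>
    h.elim (fun h => (hstuck e he).1 (h.linkConn_of_stuck hstuck))
      (fun h => (hstuck e he).2 (h.linkConn_of_stuck hstuck))

lemma IsIncrClusterEvent.eq_empty_or_univ_of_stuck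
    (hstuck : ∀ e ∈ F, ¬ LinkConn D s (ends e).1 ∧ ¬ LinkConn D s (ends e).2)
    {A : Set (E → Bool)} (hA : IsIncrClusterEvent F D ends s A) : A = ∅ ∨ A = Set.univ := by
  refine A.eq_empty_or_nonempty.imp id fun ⟨ω₀, hω₀⟩ => Set.eq_univ_of_forall fun ω => ?_
  exact hA ω₀ hω₀ ω (by rw [clusterIn_eq_empty_of_stuck hstuck, clusterIn_eq_empty_of_stuck hstuck])

end Stuck

section Measure

variable {F : Finset E} {p : E → ℝ} {e₀ : E}

variable (F p) in
noncomputable def weightOn (ω : E → Bool) : ℝ :=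
  ∏ e ∈ F, if ω e then p e else 1 - p e

lemma weightOn_nonneg (hp : ∀ e, 0 ≤ p e ∧ p e ≤ 1) (ω : E → Bool) : 0 ≤ weightOn F p ω :=
  Finset.prod_nonneg fun e _ => by
    cases ω e
    · exact sub_nonneg.2 (hp e).2
    · exact (hp e).1

variable [DecidableEq E]

lemma weightOn_update (he : e₀ ∈ F) (ω : E → Bool) (b : Bool) :
    weightOn F p (Function.update ω e₀ b)
      = (if b then p e₀ else 1 - p e₀) * weightOn (F.erase e₀) p ω := by
  rw [weightOn, ← Finset.mul_prod_erase F _ he, Function.update_self]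
  congr 1
  exact Finset.prod_congr rfl fun e he' => by
    rw [Function.update_of_ne (Finset.ne_of_mem_erase he')]

lemma indicator_update (he : e₀ ∈ F) (A : Set (E → Bool)) (ω : E → Bool) (b : Bool) :
    A.indicator (weightOn F p) (Function.update ω e₀ b)
      = (if b then p e₀ else 1 - p e₀) * (slice e₀ b A).indicator (weightOn (F.erase e₀) p) ω := by
  by_cases h : Function.update ω e₀ b ∈ A
  · rw [Set.indicator_of_mem h, Set.indicator_of_mem (show ω ∈ slice e₀ b A from h),
      weightOn_update he]
  · rw [Set.indicator_of_notMem h, Set.indicator_of_notMem (show ω ∉ slice e₀ b A from h),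
      mul_zero]

variable [Fintype E]

variable (F p) in
/-- Edges outside `F` carry no weight, so the total mass of `prOn F p` is `2 ^ #Fᶜ`;
only ratios of these numbers are meaningful. -/
noncomputable def prOn (A : Set (E → Bool)) : ℝ :=
  ∑ ω, A.indicator (weightOn F p) ω

lemma prOn_nonneg (hp : ∀ e, 0 ≤ p e ∧ p e ≤ 1) (A : Set (E → Bool)) : 0 ≤ prOn F p A :=
  Finset.sum_nonneg fun _ _ => Set.indicator_nonneg (fun ω _ => weightOn_nonneg hp ω) _

lemma prOn_mono (hp : ∀ e, 0 ≤ p e ∧ p e ≤ 1) {A B : Set (E → Bool)} (hAB : A ⊆ B) :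
    prOn F p A ≤ prOn F p B :=
  Finset.sum_le_sum fun _ _ =>
    Set.indicator_le_indicator_of_subset hAB (fun ω => weightOn_nonneg hp ω) _

lemma prOn_empty : prOn F p ∅ = 0 := by
  simp [prOn]

lemma prOn_inter_add_prOn_compl_inter (A B : Set (E → Bool)) :
    prOn F p (A ∩ B) + prOn F p (Aᶜ ∩ B) = prOn F p B := by
  rw [prOn, prOn, prOn, ← Finset.sum_add_distrib]
  refine Finset.sum_congr rfl fun ω _ => ?_
  by_cases hA : ω ∈ A <;> simp [Set.indicator_apply, hA]

lemma two_mul_sum_eq_sum_update (e₀ : E) (φ : (E → Bool) → ℝ) :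
    2 * ∑ ω, φ ω = ∑ ω, (φ (Function.update ω e₀ false) + φ (Function.update ω e₀ true)) := by
  have hflip : Function.Involutive fun ω : E → Bool => Function.update ω e₀ (!ω e₀) :=
    fun ω => by simp
  rw [two_mul]
  nth_rewrite 2 [← Equiv.sum_comp (hflip.toPerm _)]
  rw [← Finset.sum_add_distrib]
  refine Finset.sum_congr rfl fun ω _ => ?_
  rw [Function.Involutive.coe_toPerm]
  have hself : Function.update ω e₀ (ω e₀) = ω := Function.update_eq_self e₀ ω
  cases h : ω e₀ <;> rw [h] at hself <;> simp [hself, add_comm]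

lemma two_mul_prOn (he : e₀ ∈ F) (A : Set (E → Bool)) :
    2 * prOn F p A = (1 - p e₀) * prOn (F.erase e₀) p (slice e₀ false A)
      + p e₀ * prOn (F.erase e₀) p (slice e₀ true A) := by
  simp only [prOn, two_mul_sum_eq_sum_update e₀, indicator_update he, Finset.mul_sum,
    Finset.sum_add_distrib, Bool.false_eq_true, if_false, if_true]

end Measure

section Algebra

lemma mix_mul_le_mix_mul {q p a b c d a' b' c' d' : ℝ} (hq : 0 ≤ q) (hp : 0 ≤ p)
    (h₀ : a * c ≤ a' * c') (h₁ : b * d ≤ b' * d') (hcross : a * d + b * c ≤ a' * d' + b' * c') :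
    (q * a + p * b) * (q * c + p * d) ≤ (q * a' + p * b') * (q * c' + p * d') := by
  nlinarith [mul_nonneg (mul_nonneg hq hq) (sub_nonneg.2 h₀),
    mul_nonneg (mul_nonneg hp hp) (sub_nonneg.2 h₁),
    mul_nonneg (mul_nonneg hq hp) (sub_nonneg.2 hcross)]

lemma harris_cross_term {a₀ a₁ b₀ b₁ c₀ c₁ r₀ r₁ : ℝ}
    (ha₀ : 0 ≤ a₀) (ha₁ : 0 ≤ a₁) (hb₀ : 0 ≤ b₀) (hb₁ : 0 ≤ b₁) (hc₀ : 0 ≤ c₀) (hc₁ : 0 ≤ c₁)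
    (har₀ : a₀ ≤ r₀) (har₁ : a₁ ≤ r₁) (hbr₀ : b₀ ≤ r₀) (hbr₁ : b₁ ≤ r₁)
    (h₀ : a₀ * b₀ ≤ c₀ * r₀) (h₁ : a₁ * b₁ ≤ c₁ * r₁)
    (ha : a₀ * r₁ ≤ a₁ * r₀) (hb : b₀ * r₁ ≤ b₁ * r₀) :
    a₀ * b₁ + a₁ * b₀ ≤ c₀ * r₁ + c₁ * r₀ := by
  rcases (ha₀.trans har₀).eq_or_lt with rfl | hr₀
  · obtain rfl : a₀ = 0 := le_antisymm har₀ ha₀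
    obtain rfl : b₀ = 0 := le_antisymm hbr₀ hb₀
    nlinarith [mul_nonneg hc₀ (ha₁.trans har₁)]
  rcases (ha₁.trans har₁).eq_or_lt with rfl | hr₁
  · obtain rfl : a₁ = 0 := le_antisymm har₁ ha₁
    obtain rfl : b₁ = 0 := le_antisymm hbr₁ hb₁
    nlinarith [mul_nonneg hc₁ hr₀.le]
  refine le_of_mul_le_mul_right ?_ (mul_pos hr₀ hr₁)
  -- Multiplied by `r₀ r₁`, this is the rearrangement inequality for the increasing ratios
  -- `a/r` and `b/r`.
  nlinarith [mul_nonneg (sub_nonneg.2 ha) (sub_nonneg.2 hb),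
    mul_le_mul_of_nonneg_right h₀ (sq_nonneg r₁), mul_le_mul_of_nonneg_right h₁ (sq_nonneg r₀)]

lemma cross_term_of_ratios {uO uA uB uAB rO rA rB rAB : ℝ}
    (hrO : 0 ≤ rO) (hrA : 0 ≤ rA) (hrB : 0 ≤ rB) (hrAB : 0 ≤ rAB)
    (hOA : uO ≤ uA) (hOB : uO ≤ uB) (hBAB : uB ≤ uAB)
    (hr : rA * rB ≤ rAB * rO) :
    uO * rO * rAB + uB * rB * rA ≤ uA * rA * rB + uAB * rAB * rO := by
  have hAB : 0 ≤ rA * rB := mul_nonneg hrA hrB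
  have hABO : 0 ≤ rAB * rO := mul_nonneg hrAB hrO
  rcases le_or_gt uB uA with h | h
  · nlinarith [mul_le_mul_of_nonneg_right h hAB, mul_le_mul_of_nonneg_right (hOB.trans hBAB) hABO]
  · nlinarith [mul_le_mul_of_nonneg_left hr (sub_nonneg.2 h.le),
      mul_le_mul_of_nonneg_right (show uB - uA ≤ uAB - uO by linarith) hABO]

lemma sourceMono_cross_term {aO aA aB aAB rO rA rB rAB : ℝ}
    (haA : 0 ≤ aA) (haB : 0 ≤ aB) (haAB : 0 ≤ aAB) (hrB : 0 ≤ rB) (hrAB : 0 ≤ rAB)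
    (hbA : aA ≤ rA) (hbB : aB ≤ rB) (hbAB : aAB ≤ rAB)
    (hmA : rA ≤ rO) (hmAB : rAB ≤ rA) (hmAB' : rAB ≤ rB)
    (h₁ : aO * rA ≤ aA * rO) (h₂ : aB * rAB ≤ aAB * rB) (h₃ : aO * rB ≤ aB * rO)
    (h₄ : rA * rB ≤ rAB * rO) :
    aO * rAB + aB * rA ≤ aA * rB + aAB * rO := by
  rcases (haA.trans hbA).eq_or_lt with rfl | hrA
  · obtain rfl : rAB = 0 := le_antisymm hmAB hrAB
    obtain rfl : aA = 0 := le_antisymm hbA haA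
    obtain rfl : aAB = 0 := le_antisymm hbAB haAB
    simp
  rcases hrB.eq_or_lt with rfl | hrB
  · obtain rfl : rAB = 0 := le_antisymm hmAB' hrAB
    obtain rfl : aB = 0 := le_antisymm hbB haB
    obtain rfl : aAB = 0 := le_antisymm hbAB haAB
    simp
  have hrO : 0 < rO := hrA.trans_le hmA
  have hrAB : 0 < rAB := pos_of_mul_pos_left ((mul_pos hrA hrB).trans_le h₄) hrO.le
  obtain ⟨uO, rfl⟩ : ∃ u, aO = u * rO := ⟨aO / rO, (div_mul_cancel₀ _ hrO.ne').symm⟩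
  obtain ⟨uA, rfl⟩ : ∃ u, aA = u * rA := ⟨aA / rA, (div_mul_cancel₀ _ hrA.ne').symm⟩
  obtain ⟨uB, rfl⟩ : ∃ u, aB = u * rB := ⟨aB / rB, (div_mul_cancel₀ _ hrB.ne').symm⟩
  obtain ⟨uAB, rfl⟩ : ∃ u, aAB = u * rAB := ⟨aAB / rAB, (div_mul_cancel₀ _ hrAB.ne').symm⟩
  have ratio_le {u v x y : ℝ} (hx : 0 < x) (hy : 0 < y) (h : u * x * y ≤ v * y * x) : u ≤ v :=
    le_of_mul_le_mul_right (by linarith) (mul_pos hx hy)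
  have := cross_term_of_ratios hrO.le hrA.le hrB.le hrAB.le (ratio_le hrO hrA h₁)
    (ratio_le hrO hrB h₃) (ratio_le hrB hrAB h₂) h₄
  linarith

end Algebra

section Induction

variable [Fintype E] [DecidableEq E] {ends : E → V × V} {p : E → ℝ} {F : Finset E}
  {D : V → V → Prop}

lemma prOn_compl_harris {A B R : Set (E → Bool)}
    (h : prOn F p (A ∩ R) * prOn F p (B ∩ R) ≤ prOn F p (A ∩ B ∩ R) * prOn F p R) :
    prOn F p (Aᶜ ∩ R) * prOn F p (Bᶜ ∩ R) ≤ prOn F p (Aᶜ ∩ Bᶜ ∩ R) * prOn F p R := by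
  have e₁ := prOn_inter_add_prOn_compl_inter (F := F) (p := p) A R
  have e₂ := prOn_inter_add_prOn_compl_inter (F := F) (p := p) B R
  have e₃ := prOn_inter_add_prOn_compl_inter (F := F) (p := p) A (Bᶜ ∩ R)
  have e₄ := prOn_inter_add_prOn_compl_inter (F := F) (p := p) B (A ∩ R)
  rw [Set.inter_left_comm A, ← Set.inter_assoc Aᶜ] at e₃
  rw [Set.inter_left_comm B, ← Set.inter_assoc A] at e₄
  have hA : prOn F p (Aᶜ ∩ R) = prOn F p R - prOn F p (A ∩ R) := by linarith
  have hB : prOn F p (Bᶜ ∩ R) = prOn F p R - prOn F p (B ∩ R) := by linarith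
  have hAB : prOn F p (Aᶜ ∩ Bᶜ ∩ R)
      = prOn F p R - prOn F p (A ∩ R) - prOn F p (B ∩ R) + prOn F p (A ∩ B ∩ R) := by linarith
  rw [hA, hB, hAB]
  nlinarith

variable (ends p) in
def HarrisOn (F : Finset E) : Prop :=
  ∀ (D : V → V → Prop) (s : V) (S X : Set V), s ∈ S → ∀ A B : Set (E → Bool),
    IsIncrClusterEvent F D ends s A → IsIncrClusterEvent F D ends s B →
      prOn F p (A ∩ avoidIn F D ends S X) * prOn F p (B ∩ avoidIn F D ends S X)
        ≤ prOn F p (A ∩ B ∩ avoidIn F D ends S X) * prOn F p (avoidIn F D ends S X)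

variable (ends p) in
def SourceMonoOn (F : Finset E) : Prop :=
  ∀ (D : V → V → Prop) (s : V) (S X : Set V), s ∈ S → ∀ (a : V) (A : Set (E → Bool)),
    IsIncrClusterEvent F D ends s A →
      prOn F p (A ∩ avoidIn F D ends S X) * prOn F p (avoidIn F D ends (insert a S) X)
        ≤ prOn F p (A ∩ avoidIn F D ends (insert a S) X) * prOn F p (avoidIn F D ends S X)

lemma HarrisOn.avoidIn_supermodular (hH : HarrisOn ends p F) (D : V → V → Prop) (S X : Set V)
    (a b : V) :
    prOn F p (avoidIn F D ends (insert a S) X) * prOn F p (avoidIn F D ends (insert b S) X)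
      ≤ prOn F p (avoidIn F D ends (insert a (insert b S)) X)
        * prOn F p (avoidIn F D ends S X) := by
  rcases X.eq_empty_or_nonempty with rfl | ⟨x₀, hx₀⟩
  · simp [avoidIn]
  have hconn (t : V) :
      IsIncrClusterEvent F (addStar D x₀ X) ends x₀ {ω | ConnIn F (addStar D x₀ X) ends ω x₀ t} :=
    fun _ hω _ hsub => ConnIn.of_clusterIn_subset hsub hω
  have h := prOn_compl_harris (hH _ x₀ {x₀} S (Set.mem_singleton x₀) _ _ (hconn a) (hconn b))
  simp only [← avoidIn_addStar hx₀, avoidIn_singleton_insert, ← Set.inter_assoc]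
  exact h

section Step

variable {e₀ : E} {u₀ b₀ s : V} {S X : Set V}

lemma two_mul_prOn_inter_avoidIn (he : e₀ ∈ F)
    (hends : ends e₀ = (u₀, b₀) ∨ ends e₀ = (b₀, u₀)) (hsu : LinkConn D s u₀) (hs : s ∈ S)
    (A : Set (E → Bool)) :
    2 * prOn F p (A ∩ avoidIn F D ends S X)
      = (1 - p e₀) * prOn (F.erase e₀) p (slice e₀ false A ∩ avoidIn (F.erase e₀) D ends S X)
        + p e₀ * prOn (F.erase e₀) p
          (slice e₀ true A ∩ avoidIn (F.erase e₀) D ends (insert b₀ S) X) := by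
  rw [two_mul_prOn he, slice_inter, slice_inter, slice_false_avoidIn, slice_true_avoidIn he,
    avoidIn_addLink hends hsu hs]

lemma two_mul_prOn_avoidIn (he : e₀ ∈ F)
    (hends : ends e₀ = (u₀, b₀) ∨ ends e₀ = (b₀, u₀)) (hsu : LinkConn D s u₀) (hs : s ∈ S) :
    2 * prOn F p (avoidIn F D ends S X)
      = (1 - p e₀) * prOn (F.erase e₀) p (avoidIn (F.erase e₀) D ends S X)
        + p e₀ * prOn (F.erase e₀) p (avoidIn (F.erase e₀) D ends (insert b₀ S) X) := by
  simpa only [Set.univ_inter, slice_univ] using two_mul_prOn_inter_avoidIn he hends hsu hs Set.univ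

lemma SourceMonoOn.slice_false_le_slice_true (hU : SourceMonoOn ends p (F.erase e₀))
    (hp : ∀ e, 0 ≤ p e ∧ p e ≤ 1) {A : Set (E → Bool)} (hA : IsIncrClusterEvent F D ends s A)
    (hs : s ∈ S) (b₀ : V) (X : Set V) :
    prOn (F.erase e₀) p (slice e₀ false A ∩ avoidIn (F.erase e₀) D ends S X)
        * prOn (F.erase e₀) p (avoidIn (F.erase e₀) D ends (insert b₀ S) X)
      ≤ prOn (F.erase e₀) p (slice e₀ true A ∩ avoidIn (F.erase e₀) D ends (insert b₀ S) X)
        * prOn (F.erase e₀) p (avoidIn (F.erase e₀) D ends S X) :=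
  (hU D s S X hs b₀ _ hA.slice_false).trans <| mul_le_mul_of_nonneg_right
    (prOn_mono hp (Set.inter_subset_inter_left _ hA.slice_false_subset)) (prOn_nonneg hp _)

lemma harris_step (hp : ∀ e, 0 ≤ p e ∧ p e ≤ 1) (he : e₀ ∈ F)
    (hends : ends e₀ = (u₀, b₀) ∨ ends e₀ = (b₀, u₀)) (hsu : LinkConn D s u₀) (hs : s ∈ S)
    {A B : Set (E → Bool)} (hA : IsIncrClusterEvent F D ends s A)
    (hB : IsIncrClusterEvent F D ends s B)
    (hH : HarrisOn ends p (F.erase e₀)) (hU : SourceMonoOn ends p (F.erase e₀)) :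
    prOn F p (A ∩ avoidIn F D ends S X) * prOn F p (B ∩ avoidIn F D ends S X)
      ≤ prOn F p (A ∩ B ∩ avoidIn F D ends S X) * prOn F p (avoidIn F D ends S X) := by
  have h₀ := hH D s S X hs _ _ hA.slice_false hB.slice_false
  have h₁ := hH _ s S X hs _ _ (hA.slice_true he) (hB.slice_true he)
  rw [avoidIn_addLink hends hsu hs] at h₁
  have hmix := mix_mul_le_mix_mul (sub_nonneg.2 (hp e₀).2) (hp e₀).1 h₀ h₁ <|
    harris_cross_term (prOn_nonneg hp _) (prOn_nonneg hp _) (prOn_nonneg hp _)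
      (prOn_nonneg hp _) (prOn_nonneg hp _) (prOn_nonneg hp _)
      (prOn_mono hp Set.inter_subset_right) (prOn_mono hp Set.inter_subset_right)
      (prOn_mono hp Set.inter_subset_right) (prOn_mono hp Set.inter_subset_right) h₀ h₁
      (hU.slice_false_le_slice_true hp hA hs b₀ X) (hU.slice_false_le_slice_true hp hB hs b₀ X)
  rw [← slice_inter, ← slice_inter, ← two_mul_prOn_inter_avoidIn he hends hsu hs,
    ← two_mul_prOn_inter_avoidIn he hends hsu hs, ← two_mul_prOn_inter_avoidIn he hends hsu hs,
    ← two_mul_prOn_avoidIn he hends hsu hs] at hmix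
  linarith

lemma sourceMono_step (hp : ∀ e, 0 ≤ p e ∧ p e ≤ 1) (he : e₀ ∈ F)
    (hends : ends e₀ = (u₀, b₀) ∨ ends e₀ = (b₀, u₀)) (hsu : LinkConn D s u₀) (hs : s ∈ S)
    (a : V) {A : Set (E → Bool)} (hA : IsIncrClusterEvent F D ends s A)
    (hH : HarrisOn ends p (F.erase e₀)) (hU : SourceMonoOn ends p (F.erase e₀)) :
    prOn F p (A ∩ avoidIn F D ends S X) * prOn F p (avoidIn F D ends (insert a S) X)
      ≤ prOn F p (A ∩ avoidIn F D ends (insert a S) X) * prOn F p (avoidIn F D ends S X) := by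
  have hsa : s ∈ insert a S := Set.mem_insert_of_mem a hs
  have h₁ := hU D s S X hs a _ hA.slice_false
  have h₂ := hU _ s S X hs a _ (hA.slice_true he)
  rw [avoidIn_addLink hends hsu hs, avoidIn_addLink hends hsu hsa] at h₂
  have hsuper := hH.avoidIn_supermodular D S X a b₀
  rw [Set.insert_comm a b₀] at hsuper
  have hmix := mix_mul_le_mix_mul (sub_nonneg.2 (hp e₀).2) (hp e₀).1 h₁ h₂ <|
    sourceMono_cross_term (prOn_nonneg hp _) (prOn_nonneg hp _) (prOn_nonneg hp _)
      (prOn_nonneg hp _) (prOn_nonneg hp _) (prOn_mono hp Set.inter_subset_right)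
      (prOn_mono hp Set.inter_subset_right) (prOn_mono hp Set.inter_subset_right)
      (prOn_mono hp (avoidIn_anti_sources (Set.subset_insert a S) X))
      (prOn_mono hp (avoidIn_anti_sources (Set.subset_insert b₀ _) X))
      (prOn_mono hp (avoidIn_anti_sources (Set.insert_subset_insert (Set.subset_insert a S)) X))
      h₁ h₂ (hU.slice_false_le_slice_true hp hA hs b₀ X) hsuper
  rw [← two_mul_prOn_inter_avoidIn he hends hsu hs, ← two_mul_prOn_inter_avoidIn he hends hsu hsa,
    ← two_mul_prOn_avoidIn he hends hsu hs, ← two_mul_prOn_avoidIn he hends hsu hsa] at hmix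
  linarith

end Step

lemma harris_of_stuck {s : V}
    (hstuck : ∀ e ∈ F, ¬ LinkConn D s (ends e).1 ∧ ¬ LinkConn D s (ends e).2)
    {A : Set (E → Bool)} (hA : IsIncrClusterEvent F D ends s A) (B R : Set (E → Bool)) :
    prOn F p (A ∩ R) * prOn F p (B ∩ R) ≤ prOn F p (A ∩ B ∩ R) * prOn F p R := by
  rcases hA.eq_empty_or_univ_of_stuck hstuck with rfl | rfl
  · simp [prOn_empty]
  · rw [Set.univ_inter, Set.univ_inter, mul_comm]

lemma sourceMono_of_stuck {s : V}
    (hstuck : ∀ e ∈ F, ¬ LinkConn D s (ends e).1 ∧ ¬ LinkConn D s (ends e).2)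
    {A : Set (E → Bool)} (hA : IsIncrClusterEvent F D ends s A) (R R' : Set (E → Bool)) :
    prOn F p (A ∩ R) * prOn F p R' ≤ prOn F p (A ∩ R') * prOn F p R := by
  rcases hA.eq_empty_or_univ_of_stuck hstuck with rfl | rfl
  · simp [prOn_empty]
  · rw [Set.univ_inter, Set.univ_inter, mul_comm]

theorem harrisOn_and_sourceMonoOn (hp : ∀ e, 0 ≤ p e ∧ p e ≤ 1) (F : Finset E) :
    HarrisOn ends p F ∧ SourceMonoOn ends p F := by
  induction F using Finset.strongInduction with
  | H F ih =>
    refine ⟨fun D s S X hs A B hA hB => ?_, fun D s S X hs a A hA => ?_⟩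
    all_goals rcases exists_pivot_or_stuck F D ends s with ⟨e₀, he₀, u₀, b₀, hends, hsu⟩ | hstuck
    · have ih₀ := ih _ (Finset.erase_ssubset he₀)
      exact harris_step hp he₀ hends hsu hs hA hB ih₀.1 ih₀.2
    · exact harris_of_stuck hstuck hA B _
    · have ih₀ := ih _ (Finset.erase_ssubset he₀)
      exact sourceMono_step hp he₀ hends hsu hs a hA ih₀.1 ih₀.2
    · exact sourceMono_of_stuck hstuck hA _ _

end Induction

section Specialization

variable [Fintype E] {ends : E → V × V} {ω : E → Bool} {s : V}

lemma linkIn_univ_bot :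
    LinkIn Finset.univ (fun _ _ => False) ends ω = Step ends ω := by
  ext u v
  simp [LinkIn, Step]

lemma connIn_univ_bot :
    ConnIn Finset.univ (fun _ _ => False) ends ω = Reach ends ω := by
  rw [ConnIn, linkIn_univ_bot]
  rfl

lemma clusterIn_univ_bot :
    clusterIn Finset.univ (fun _ _ => False) ends s ω = Cluster ends s ω := by
  simp [clusterIn, Cluster, connIn_univ_bot]

lemma avoidIn_univ_bot (X : Set V) :
    avoidIn Finset.univ (fun _ _ => False) ends {s} X = RX ends s X := by
  ext ω
  simp [avoidIn, RX, connIn_univ_bot]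

lemma isIncrClusterEvent_univ_bot {A : Set (E → Bool)} :
    IsIncrClusterEvent Finset.univ (fun _ _ => False) ends s A
      ↔ ∀ ω ∈ A, ∀ ω', Cluster ends s ω ⊆ Cluster ends s ω' → ω' ∈ A := by
  simp only [IsIncrClusterEvent, clusterIn_univ_bot]

lemma condPr_mul_condPr_le [DecidableEq E] {p : E → ℝ} {A B R : Set (E → Bool)}
    (h : Pr p (A ∩ R) * Pr p (B ∩ R) ≤ Pr p (A ∩ B ∩ R) * Pr p R) :
    condPr p A R * condPr p B R ≤ condPr p (A ∩ B) R := by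
  rw [condPr, condPr, condPr, div_mul_div_comm]
  rcases eq_or_ne (Pr p R) 0 with hR | hR
  · simp [hR]
  · rw [← mul_div_mul_right (Pr p (A ∩ B ∩ R)) _ hR]
    exact div_le_div_of_nonneg_right h (mul_self_nonneg _)

end Specialization

theorem stmt1_general [Fintype E] [DecidableEq E]
    (ends : E → V × V) (p : E → ℝ) (hp : ∀ e, 0 ≤ p e ∧ p e ≤ 1)
    (s : V) (X : Set V)
    (A B : Set (E → Bool))
    (hA : ∀ ω ∈ A, ∀ ω', Cluster ends s ω ⊆ Cluster ends s ω' → ω' ∈ A)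
    (hB : ∀ ω ∈ B, ∀ ω', Cluster ends s ω ⊆ Cluster ends s ω' → ω' ∈ B) :
    condPr p (A ∩ B) (RX ends s X) ≥
      condPr p A (RX ends s X) * condPr p B (RX ends s X) := by
  have h := (harrisOn_and_sourceMonoOn hp Finset.univ).1 (fun _ _ => False) s {s} X
    (Set.mem_singleton s) A B (isIncrClusterEvent_univ_bot.2 hA) (isIncrClusterEvent_univ_bot.2 hB)
  rw [avoidIn_univ_bot] at h
  exact condPr_mul_condPr_le h

/-- Theorem 1.2. If `A`, `B` are increasing events determined
by the open cluster of `s`, and `X ⊆ V \ {s}` with `Pr(R_X) > 0`, then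
conditioned on `R_X` the events `A` and `B` are positively correlated:
`Pr(A ∩ B | R_X) ≥ Pr(A | R_X) · Pr(B | R_X)`. -/
theorem stmt1 [Fintype V] [Fintype E] [DecidableEq E]
    (ends : E → V × V) (p : E → ℝ) (hp : ∀ e, 0 ≤ p e ∧ p e ≤ 1)
    (s : V) (X : Set V) (hX : s ∉ X)
    (hpos : 0 < Pr p (RX ends s X))
    (A B : Set (E → Bool))
    (hA : ∀ ω ∈ A, ∀ ω', Cluster ends s ω ⊆ Cluster ends s ω' → ω' ∈ A)
    (hB : ∀ ω ∈ B, ∀ ω', Cluster ends s ω ⊆ Cluster ends s ω' → ω' ∈ B) :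
    condPr p (A ∩ B) (RX ends s X) ≥
      condPr p A (RX ends s X) * condPr p B (RX ends s X) :=
  stmt1_general ends p hp s X A B hA hB

end BondPerc
end

section
/- Let s be a vertex of G, let X ⊆ V \ {s} with Pr(R_X) > 0, let f be a bounded increasing function of C_s and g a bounded decreasing function of C_s. Then E[f·g | R_X] ≤ E[f | R_X] · E[g | R_X]. -/
/-!
Bond percolation on a finite graph `G = (V, E)`.
Edges are given by their endpoints `ends : E → V × V` (unordered: a path may
traverse an edge in either direction).  Each edge `e` is independently open
(`ω e = true`) with probability `p e`; `Pr` is the resulting product measure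
on configurations `ω : E → Bool`.
-/

attribute [local instance] Classical.propDecidable

namespace BondPerc

variable {V E : Type*}

/-!
Replacing `g` by `-g`, the claim says that increasing functions of the cluster are positively
correlated given `R_X`. This is proved for clusters of a set `S` of sources, by induction on
the number of edges. Take an edge `e₀` at `S`. Given that `e₀` is closed we are in the graph
without `e₀`; given that it is open, in the same graph with the endpoints of `e₀` added to the
sources, which must now also avoid `X`. Both branches are covered by induction. What remains
is to show that increasing functions have larger means in the open branch. Given the cluster
`C` of `S`, the edges not touching `C` are still independent, so the conditional probability
that the endpoints of `e₀` avoid `X` is an increasing function of `C`. Positive correlation in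
the closed branch then gives the comparison.
-/

open Set

section Reachability

variable (ends : E → V × V)

def reachFrom (ω : E → Bool) (S : Set V) : Set V := {v | ∃ s ∈ S, Reach ends ω s v}

def incident (W : Set V) : Set E := {e | (ends e).1 ∈ W ∨ (ends e).2 ∈ W}

def explored (S : Set V) (ω : E → Bool) : Set E := incident ends (reachFrom ends ω S)

def setCluster (S : Set V) (ω : E → Bool) : Set E := {e | ω e = true ∧ e ∈ explored ends S ω}

def avoids (S X : Set V) : Set (E → Bool) := {ω | ∀ x ∈ X, x ∉ reachFrom ends ω S}

def ClusterMonotone (S : Set V) (f : (E → Bool) → ℝ) : Prop :=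
  ∀ ω ω', setCluster ends S ω ⊆ setCluster ends S ω' → f ω ≤ f ω'

variable {ends}

lemma ClusterMonotone.eq_of_setCluster_eq {S : Set V} {f : (E → Bool) → ℝ}
    (hf : ClusterMonotone ends S f) {ω ω' : E → Bool}
    (h : setCluster ends S ω = setCluster ends S ω') : f ω = f ω' :=
  le_antisymm (hf ω ω' h.le) (hf ω' ω h.ge)

lemma cluster_eq_setCluster (s : V) (ω : E → Bool) :
    Cluster ends s ω = setCluster ends {s} ω := by
  ext e
  simp [Cluster, setCluster, explored, incident, reachFrom]

lemma RX_eq_avoids (s : V) (X : Set V) : RX ends s X = avoids ends {s} X := by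
  ext ω
  simp [RX, avoids, reachFrom]

lemma subset_reachFrom (ω : E → Bool) (S : Set V) : S ⊆ reachFrom ends ω S :=
  fun s hs => ⟨s, hs, .refl⟩

lemma mem_reachFrom_of_step {ω : E → Bool} {S : Set V} {u v : V}
    (hu : u ∈ reachFrom ends ω S) (h : Step ends ω u v) : v ∈ reachFrom ends ω S :=
  let ⟨s, hs, hr⟩ := hu
  ⟨s, hs, hr.tail h⟩

lemma reachFrom_subset {ω : E → Bool} {S W : Set V} (hS : S ⊆ W)
    (hW : ∀ u v, u ∈ reachFrom ends ω S → u ∈ W → Step ends ω u v → v ∈ W) :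
    reachFrom ends ω S ⊆ W := by
  rintro v ⟨s, hs, hr⟩
  induction hr with
  | refl => exact hS hs
  | tail hb hstep ih => exact hW _ _ ⟨s, hs, hb⟩ ih hstep

lemma reachFrom_subset_reachFrom {E' : Type*} {ends' : E' → V × V} {ω : E → Bool}
    {ω' : E' → Bool} {S S' : Set V} (hS : S ⊆ reachFrom ends' ω' S')
    (hstep : ∀ u v, Step ends ω u v → Step ends' ω' u v) :
    reachFrom ends ω S ⊆ reachFrom ends' ω' S' :=
  reachFrom_subset hS fun _ _ _ hu h => mem_reachFrom_of_step hu (hstep _ _ h)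

lemma reachFrom_union (ω : E → Bool) (S S' : Set V) :
    reachFrom ends ω (S ∪ S') = reachFrom ends ω S ∪ reachFrom ends ω S' := by
  ext v
  simp only [reachFrom, mem_union, mem_ofPred_eq, or_and_right, exists_or]

lemma avoids_union (S S' X : Set V) :
    avoids ends (S ∪ S') X = avoids ends S X ∩ avoids ends S' X := by
  ext ω
  simp only [avoids, reachFrom_union, mem_union, not_or, mem_ofPred_eq, mem_inter_iff,
    forall_and]

lemma mem_incident_of_left {W : Set V} {e : E} {u v : V}
    (he : ends e = (u, v) ∨ ends e = (v, u)) (hu : u ∈ W) : e ∈ incident ends W := by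
  rcases he with h | h <;> simp [incident, h, hu]

lemma notMem_incident {W : Set V} {e : E} {u v : V}
    (he : ends e = (u, v) ∨ ends e = (v, u)) (hu : u ∉ W) (hv : v ∉ W) :
    e ∉ incident ends W := by
  rcases he with h | h <;> simp [incident, h, hu, hv]

lemma setCluster_mono {ω ω' : E → Bool} (h : ∀ e, ω e = true → ω' e = true) (S : Set V) :
    setCluster ends S ω ⊆ setCluster ends S ω' := by
  have hreach : reachFrom ends ω S ⊆ reachFrom ends ω' S :=
    reachFrom_subset_reachFrom (subset_reachFrom ω' S) fun _ _ ⟨e, he, hends⟩ =>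
      ⟨e, h e he, hends⟩
  exact fun e ⟨he, hex⟩ => ⟨h e he, hex.imp (@hreach _) (@hreach _)⟩

lemma reachFrom_subset_of_setCluster_subset {ω ω' : E → Bool} {S : Set V}
    (h : setCluster ends S ω ⊆ setCluster ends S ω') :
    reachFrom ends ω S ⊆ reachFrom ends ω' S :=
  reachFrom_subset (subset_reachFrom ω' S) fun _ _ hu hu' ⟨e, he, hends⟩ =>
    mem_reachFrom_of_step hu' ⟨e, (h ⟨he, mem_incident_of_left hends hu⟩).1, hends⟩

lemma setCluster_eq_empty {S : Set V} (h : ∀ e, e ∉ incident ends S) (ω : E → Bool) :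
    setCluster ends S ω = ∅ := by
  have hS : reachFrom ends ω S ⊆ S :=
    reachFrom_subset subset_rfl fun _ _ _ hu ⟨e, _, hends⟩ =>
      absurd (mem_incident_of_left hends hu) (h e)
  exact eq_empty_of_forall_notMem fun e ⟨_, hex⟩ => h e (hex.imp (@hS _) (@hS _))

end Reachability

section Resampling

variable (ends : E → V × V)

noncomputable def resample (S : Set V) (ω η : E → Bool) : E → Bool := (explored ends S ω).piecewise ω η

variable {ends}

lemma reachFrom_resample (S : Set V) (ω η : E → Bool) :
    reachFrom ends (resample ends S ω η) S = reachFrom ends ω S := by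
  apply Subset.antisymm
  · refine reachFrom_subset (subset_reachFrom ω S) fun u v _ hu ⟨e, he, hends⟩ => ?_
    have hex : e ∈ explored ends S ω := mem_incident_of_left hends hu
    rw [resample, piecewise_eq_of_mem _ _ _ hex] at he
    exact mem_reachFrom_of_step hu ⟨e, he, hends⟩
  · refine reachFrom_subset (subset_reachFrom _ S) fun u v hu hu' ⟨e, he, hends⟩ => ?_
    have hex : e ∈ explored ends S ω := mem_incident_of_left hends hu
    exact mem_reachFrom_of_step hu' ⟨e, by rwa [resample, piecewise_eq_of_mem _ _ _ hex], hends⟩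

lemma explored_resample (S : Set V) (ω η : E → Bool) :
    explored ends S (resample ends S ω η) = explored ends S ω := by
  rw [explored, reachFrom_resample, explored]

lemma setCluster_resample (S : Set V) (ω η : E → Bool) :
    setCluster ends S (resample ends S ω η) = setCluster ends S ω := by
  ext e
  simp only [setCluster, mem_ofPred_eq, explored_resample]
  exact and_congr_left fun hex => by rw [resample, piecewise_eq_of_mem _ _ _ hex]

lemma resample_mem_avoids_iff (S X : Set V) (ω η : E → Bool) :
    resample ends S ω η ∈ avoids ends S X ↔ ω ∈ avoids ends S X := by
  simp only [avoids, mem_ofPred_eq, reachFrom_resample]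

/-- A path from `S'` that is open after resampling a larger cluster either enters that
cluster or runs through unexplored edges, which are open after resampling the smaller one too. -/
lemma resample_mem_avoids_of_setCluster_subset {S : Set V} (S' X : Set V) {ω₁ ω₂ : E → Bool}
    (h : setCluster ends S ω₁ ⊆ setCluster ends S ω₂) (η : E → Bool)
    (h₁ : resample ends S ω₁ η ∈ avoids ends S X → resample ends S ω₁ η ∈ avoids ends S' X)
    (h₂ : resample ends S ω₂ η ∈ avoids ends S X) :
    resample ends S ω₂ η ∈ avoids ends S' X := by
  have hW := reachFrom_subset_of_setCluster_subset h
  have hS : reachFrom ends (resample ends S ω₂ η) S' ⊆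
      reachFrom ends (resample ends S ω₁ η) S' ∪ reachFrom ends ω₂ S := by
    refine reachFrom_subset (subset_reachFrom _ S' |>.trans subset_union_left)
      fun u v _ hu ⟨e, he, hends⟩ => ?_
    by_cases hu₂ : u ∈ reachFrom ends ω₂ S
    · rw [← reachFrom_resample S ω₂ η] at hu₂ ⊢
      exact Or.inr (mem_reachFrom_of_step hu₂ ⟨e, he, hends⟩)
    by_cases hv₂ : v ∈ reachFrom ends ω₂ S
    · exact Or.inr hv₂
    have hn₂ : e ∉ explored ends S ω₂ := notMem_incident hends hu₂ hv₂
    have hn₁ : e ∉ explored ends S ω₁ := notMem_incident hends (hu₂ <| hW ·) (hv₂ <| hW ·)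
    rw [resample, piecewise_eq_of_notMem _ _ _ hn₂] at he
    exact Or.inl (mem_reachFrom_of_step (hu.resolve_right hu₂)
      ⟨e, by rwa [resample, piecewise_eq_of_notMem _ _ _ hn₁], hends⟩)
  have h₁' : resample ends S ω₁ η ∈ avoids ends S' X := by
    refine h₁ fun x hx hxr => ?_
    rw [reachFrom_resample] at hxr
    exact h₂ x hx (by rw [reachFrom_resample]; exact hW hxr)
  intro x hx hxr
  rcases hS hxr with hxr | hxr
  · exact h₁' x hx hxr
  · exact h₂ x hx (by rwa [reachFrom_resample])

end Resampling

section Sums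

variable [Fintype E] {p : E → ℝ}

lemma weight_nonneg (hp : ∀ e, 0 ≤ p e ∧ p e ≤ 1) (ω : E → Bool) : 0 ≤ weight p ω :=
  Finset.prod_nonneg fun e _ => by
    cases ω e <;> simp [(hp e).1, (hp e).2]

lemma weight_piecewise_mul (D : Set E) (ω η : E → Bool) :
    weight p (D.piecewise ω η) * weight p (D.piecewise η ω) = weight p ω * weight p η := by
  simp only [weight, ← Finset.prod_mul_distrib]
  refine Finset.prod_congr rfl fun e _ => ?_
  by_cases he : e ∈ D <;> simp [he, mul_comm]

variable [DecidableEq E] (p)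

/-- `E[h; A]`, so that `condExp p h A = weightedSum p A h / Pr p A`. -/
noncomputable def weightedSum (A : Set (E → Bool)) (h : (E → Bool) → ℝ) : ℝ :=
  ∑ ω, A.indicator (fun ω => weight p ω * h ω) ω

lemma sum_weight : ∑ ω : E → Bool, weight p ω = 1 :=
  calc ∑ ω : E → Bool, weight p ω = ∏ e, ∑ b : Bool, if b then p e else 1 - p e :=
        (Fintype.prod_sum fun e (b : Bool) => if b then p e else 1 - p e).symm
    _ = 1 := by simp

variable {p}

lemma Pr_eq_weightedSum (A : Set (E → Bool)) : Pr p A = weightedSum p A fun _ => 1 := by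
  simp only [Pr, weightedSum, mul_one]

lemma weightedSum_mono (hp : ∀ e, 0 ≤ p e ∧ p e ≤ 1) (A : Set (E → Bool))
    {h h' : (E → Bool) → ℝ} (hh : ∀ ω, h ω ≤ h' ω) : weightedSum p A h ≤ weightedSum p A h' :=
  Finset.sum_le_sum fun ω _ =>
    indicator_le_indicator (mul_le_mul_of_nonneg_left (hh ω) (weight_nonneg hp ω))

lemma Pr_mono (hp : ∀ e, 0 ≤ p e ∧ p e ≤ 1) {A B : Set (E → Bool)} (hAB : A ⊆ B) :
    Pr p A ≤ Pr p B :=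
  Finset.sum_le_sum fun ω _ => indicator_le_indicator_of_subset hAB (weight_nonneg hp) ω

lemma Pr_nonneg (hp : ∀ e, 0 ≤ p e ∧ p e ≤ 1) (A : Set (E → Bool)) : 0 ≤ Pr p A := by
  simpa [Pr] using Pr_mono hp (empty_subset A)

lemma weightedSum_neg (A : Set (E → Bool)) (h : (E → Bool) → ℝ) :
    weightedSum p A (fun ω => -h ω) = -weightedSum p A h := by
  simp only [weightedSum, ← Finset.sum_neg_distrib]
  refine Finset.sum_congr rfl fun ω _ => ?_
  by_cases hω : ω ∈ A <;> simp [hω]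

lemma weightedSum_const (A : Set (E → Bool)) (c : ℝ) :
    weightedSum p A (fun _ => c) = c * Pr p A := by
  simp only [Pr, weightedSum, Finset.mul_sum]
  refine Finset.sum_congr rfl fun ω _ => ?_
  by_cases hω : ω ∈ A <;> simp [hω, mul_comm]

lemma weightedSum_eq_zero_of_Pr_eq_zero (hp : ∀ e, 0 ≤ p e ∧ p e ≤ 1) {A : Set (E → Bool)}
    (hA : Pr p A = 0) (h : (E → Bool) → ℝ) : weightedSum p A h = 0 := by
  have hw : ∀ ω ∈ A, weight p ω = 0 := fun ω hω => by
    have := (Finset.sum_eq_zero_iff_of_nonneg fun ω _ =>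
      indicator_nonneg (fun ω _ => weight_nonneg hp ω) ω).1 hA ω (Finset.mem_univ ω)
    rwa [indicator_of_mem hω] at this
  refine Finset.sum_eq_zero fun ω _ => ?_
  by_cases hω : ω ∈ A
  · rw [indicator_of_mem hω, hw ω hω, zero_mul]
  · rw [indicator_of_notMem hω]

/-- By `hD`, exchanging `ω` and `η` off `D ω` is an involution of pairs of configurations, and it
preserves the product weight. -/
theorem sum_weight_mul_piecewise (D : (E → Bool) → Set E)
    (hD : ∀ ω η, D ((D ω).piecewise ω η) = D ω) (Φ : (E → Bool) → ℝ) :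
    ∑ ω, ∑ η, weight p ω * weight p η * Φ ((D ω).piecewise ω η) = ∑ ω, weight p ω * Φ ω := by
  let σ : (E → Bool) × (E → Bool) → (E → Bool) × (E → Bool) :=
    fun x => ((D x.1).piecewise x.1 x.2, (D x.1).piecewise x.2 x.1)
  have hσ : Function.Involutive σ := by
    rintro ⟨ω, η⟩
    ext e <;> by_cases he : e ∈ D ω <;> simp [σ, he, hD]
  calc ∑ ω, ∑ η, weight p ω * weight p η * Φ ((D ω).piecewise ω η)
      = ∑ x, weight p (σ x).1 * weight p (σ x).2 * Φ (σ x).1 := by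
        rw [Fintype.sum_prod_type]
        simp only [σ, weight_piecewise_mul]
    _ = ∑ x : (E → Bool) × (E → Bool), weight p x.1 * weight p x.2 * Φ x.1 :=
        Equiv.sum_comp hσ.toPerm fun x : (E → Bool) × (E → Bool) =>
          weight p x.1 * weight p x.2 * Φ x.1
    _ = ∑ ω, weight p ω * Φ ω := by
        simp only [Fintype.sum_prod_type, mul_right_comm _ _ (Φ _), ← Finset.mul_sum,
          sum_weight, mul_one]

end Sums

section Association

variable [Fintype E] [DecidableEq E] (p : E → ℝ) (ends : E → V × V)

/-- Stated with denominators cleared, so that it is meaningful (and trivially true) when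
the conditioning event is null. -/
def PositivelyAssociated (S X : Set V) : Prop :=
  ∀ f g, ClusterMonotone ends S f → ClusterMonotone ends S g →
    weightedSum p (avoids ends S X) f * weightedSum p (avoids ends S X) g ≤
      weightedSum p (avoids ends S X) (fun ω => f ω * g ω) * Pr p (avoids ends S X)

/-- The conditional probability, given the cluster of `S` in `ω`, that `S` avoiding `X`
implies `S'` avoiding `X`. -/
noncomputable def avoidProb (S S' X : Set V) (ω : E → Bool) : ℝ :=
  Pr p {η | resample ends S ω η ∈ avoids ends S X → resample ends S ω η ∈ avoids ends S' X}

variable {p ends}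

lemma clusterMonotone_avoidProb (hp : ∀ e, 0 ≤ p e ∧ p e ≤ 1) (S S' X : Set V) :
    ClusterMonotone ends S (avoidProb p ends S S' X) :=
  fun _ _ h => Pr_mono hp fun η h₁ => resample_mem_avoids_of_setCluster_subset S' X h η h₁

lemma weightedSum_mul_avoidProb {S : Set V} (S' X : Set V) {F : (E → Bool) → ℝ}
    (hF : ClusterMonotone ends S F) :
    weightedSum p (avoids ends S X) (fun ω => F ω * avoidProb p ends S S' X ω) =
      weightedSum p (avoids ends (S ∪ S') X) F := by
  rw [avoids_union]
  have hpoint : ∀ ω, (avoids ends S X).indicator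
      (fun ω => weight p ω * (F ω * avoidProb p ends S S' X ω)) ω =
      ∑ η, weight p ω * weight p η *
        (avoids ends S X ∩ avoids ends S' X).indicator F (resample ends S ω η) := by
    intro ω
    by_cases hω : ω ∈ avoids ends S X
    · rw [indicator_of_mem hω, avoidProb, Pr, Finset.mul_sum, Finset.mul_sum]
      refine Finset.sum_congr rfl fun η _ => ?_
      have hR : resample ends S ω η ∈ avoids ends S X := (resample_mem_avoids_iff S X ω η).2 hω
      rw [hF.eq_of_setCluster_eq (setCluster_resample S ω η) |>.symm]
      by_cases hT : resample ends S ω η ∈ avoids ends S' X <;> simp [hR, hT, mul_comm, mul_left_comm]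
    · have hR η : resample ends S ω η ∉ avoids ends S X := (resample_mem_avoids_iff S X ω η).not.2 hω
      simp [hω, hR]
  calc weightedSum p (avoids ends S X) (fun ω => F ω * avoidProb p ends S S' X ω)
      = ∑ ω, ∑ η, weight p ω * weight p η * (avoids ends S X ∩ avoids ends S' X).indicator F
          ((explored ends S ω).piecewise ω η) :=
        Finset.sum_congr rfl fun ω _ => hpoint ω
    _ = ∑ ω, weight p ω * (avoids ends S X ∩ avoids ends S' X).indicator F ω :=
        sum_weight_mul_piecewise (explored ends S) (explored_resample S) _
    _ = weightedSum p (avoids ends S X ∩ avoids ends S' X) F := by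
        simp only [weightedSum, indicator_mul_right]

theorem PositivelyAssociated.weightedSum_mul_Pr_union_le (hp : ∀ e, 0 ≤ p e ∧ p e ≤ 1)
    {S X : Set V} (hPA : PositivelyAssociated p ends S X) {F : (E → Bool) → ℝ}
    (hF : ClusterMonotone ends S F) (S' : Set V) :
    weightedSum p (avoids ends S X) F * Pr p (avoids ends (S ∪ S') X) ≤
      weightedSum p (avoids ends (S ∪ S') X) F * Pr p (avoids ends S X) := by
  have hone := weightedSum_mul_avoidProb (p := p) S' X
    (show ClusterMonotone ends S fun _ => 1 from fun _ _ _ => le_rfl)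
  simp only [one_mul, ← Pr_eq_weightedSum] at hone
  simpa only [hone, weightedSum_mul_avoidProb S' X hF] using
    hPA F _ hF (clusterMonotone_avoidProb hp S S' X)

end Association

section DeleteEdge

variable (ends : E → V × V) (e₀ : E)

def deleteEdge : {e // e ≠ e₀} → V × V := fun e => ends e

variable [DecidableEq E]

def paste (b : Bool) (ω : {e // e ≠ e₀} → Bool) : E → Bool :=
  (Equiv.funSplitAt e₀ Bool).symm (b, ω)

variable {ends e₀}

@[simp]
lemma paste_self (b : Bool) (ω : {e // e ≠ e₀} → Bool) : paste e₀ b ω e₀ = b := by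
  simp [paste]

lemma paste_of_ne (b : Bool) (ω : {e // e ≠ e₀} → Bool) {e : E} (h : e ≠ e₀) :
    paste e₀ b ω e = ω ⟨e, h⟩ := by
  simp [paste, h]

lemma paste_false_le_paste_true (ω : {e // e ≠ e₀} → Bool) (e : E)
    (h : paste e₀ false ω e = true) : paste e₀ true ω e = true := by
  by_cases he : e = e₀
  · subst he
    simp at h
  · rwa [paste_of_ne _ _ he] at h ⊢

lemma weight_paste [Fintype E] (p : E → ℝ) (b : Bool) (ω : {e // e ≠ e₀} → Bool) :
    weight p (paste e₀ b ω) =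
      (if b then p e₀ else 1 - p e₀) * weight (fun e : {e // e ≠ e₀} => p e) ω := by
  rw [weight, Fintype.prod_eq_mul_prod_subtype_ne _ e₀, paste_self]
  exact congrArg _ (Finset.prod_congr rfl fun e _ => by rw [paste_of_ne _ _ e.2])

lemma weightedSum_paste [Fintype E] (p : E → ℝ) (A : Set (E → Bool)) (h : (E → Bool) → ℝ) :
    weightedSum p A h = ∑ b : Bool, (if b then p e₀ else 1 - p e₀) *
      weightedSum (fun e : {e // e ≠ e₀} => p e) (paste e₀ b ⁻¹' A) (fun ω => h (paste e₀ b ω)) :=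
  calc weightedSum p A h
      = ∑ b, ∑ ω, A.indicator (fun ω => weight p ω * h ω) (paste e₀ b ω) := by
        rw [weightedSum, ← (Equiv.funSplitAt e₀ Bool).symm.sum_comp, Fintype.sum_prod_type]
        rfl
    _ = _ := by
        refine Finset.sum_congr rfl fun b _ => ?_
        rw [weightedSum, Finset.mul_sum]
        refine Finset.sum_congr rfl fun ω _ => ?_
        by_cases hω : paste e₀ b ω ∈ A
        · rw [indicator_of_mem hω, indicator_of_mem (show ω ∈ paste e₀ b ⁻¹' A from hω),
            weight_paste, mul_assoc]
        · rw [indicator_of_notMem hω, indicator_of_notMem (show ω ∉ paste e₀ b ⁻¹' A from hω),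
            mul_zero]

lemma reachFrom_deleteEdge_subset (b : Bool) (ω : {e // e ≠ e₀} → Bool) (S : Set V) :
    reachFrom (deleteEdge ends e₀) ω S ⊆ reachFrom ends (paste e₀ b ω) S :=
  reachFrom_subset_reachFrom (subset_reachFrom _ S) fun _ _ ⟨e, he, hends⟩ =>
    ⟨e, by rwa [paste_of_ne _ _ e.2], hends⟩

lemma reachFrom_paste_false (ω : {e // e ≠ e₀} → Bool) (S : Set V) :
    reachFrom ends (paste e₀ false ω) S = reachFrom (deleteEdge ends e₀) ω S := by
  refine Subset.antisymm (reachFrom_subset_reachFrom (subset_reachFrom _ S)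
    fun _ _ ⟨e, he, hends⟩ => ?_) (reachFrom_deleteEdge_subset _ ω S)
  have hne : e ≠ e₀ := by
    rintro rfl
    simp at he
  exact ⟨⟨e, hne⟩, by rwa [paste_of_ne _ _ hne] at he, hends⟩

lemma reachFrom_paste_true {S : Set V} (h₀ : e₀ ∈ incident ends S) (ω : {e // e ≠ e₀} → Bool) :
    reachFrom ends (paste e₀ true ω) S =
      reachFrom (deleteEdge ends e₀) ω (S ∪ {(ends e₀).1, (ends e₀).2}) := by
  apply Subset.antisymm
  · refine reachFrom_subset (subset_union_left.trans (subset_reachFrom _ _))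
      fun u v _ hu ⟨e, he, hends⟩ => ?_
    by_cases hne : e = e₀
    · subst hne
      refine subset_reachFrom _ _ (Or.inr ?_)
      rcases hends with h | h <;> simp [h]
    · exact mem_reachFrom_of_step hu ⟨⟨e, hne⟩, by rwa [paste_of_ne _ _ hne] at he, hends⟩
  · refine reachFrom_subset_reachFrom ?_ fun _ _ ⟨e, he, hends⟩ =>
      ⟨e, by rwa [paste_of_ne _ _ e.2], hends⟩
    have hstep : Step ends (paste e₀ true ω) (ends e₀).1 (ends e₀).2 :=
      ⟨e₀, paste_self _ _, Or.inl rfl⟩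
    have hends : (ends e₀).1 ∈ reachFrom ends (paste e₀ true ω) S ∧
        (ends e₀).2 ∈ reachFrom ends (paste e₀ true ω) S := by
      rcases h₀ with h | h
      · exact ⟨subset_reachFrom _ _ h, mem_reachFrom_of_step (subset_reachFrom _ _ h) hstep⟩
      · obtain ⟨e, he, hends⟩ := hstep
        exact ⟨mem_reachFrom_of_step (subset_reachFrom _ _ h) ⟨e, he, hends.symm⟩,
          subset_reachFrom _ _ h⟩
    rintro v (hv | rfl | rfl)
    exacts [subset_reachFrom _ _ hv, hends.1, hends.2]

lemma setCluster_paste_false (S : Set V) (ω : {e // e ≠ e₀} → Bool) :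
    setCluster ends S (paste e₀ false ω) =
      Subtype.val '' setCluster (deleteEdge ends e₀) S ω := by
  ext e
  by_cases hne : e = e₀
  · subst hne
    simp [setCluster]
  · simp [setCluster, explored, incident, reachFrom_paste_false, paste_of_ne _ _ hne, hne,
      deleteEdge]

lemma setCluster_paste_true {S : Set V} (h₀ : e₀ ∈ incident ends S)
    (ω : {e // e ≠ e₀} → Bool) :
    setCluster ends S (paste e₀ true ω) = insert e₀
      (Subtype.val '' setCluster (deleteEdge ends e₀) (S ∪ {(ends e₀).1, (ends e₀).2}) ω) := by
  ext e
  by_cases hne : e = e₀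
  · subst hne
    simp only [mem_insert_iff, true_or, iff_true]
    exact ⟨paste_self _ _, h₀.imp (subset_reachFrom _ S ·) (subset_reachFrom _ S ·)⟩
  · simp only [setCluster, explored, incident, mem_ofPred_eq, reachFrom_paste_true h₀]
    simp [paste_of_ne _ _ hne, hne, deleteEdge]

lemma ClusterMonotone.comp_paste_false {S : Set V} {f : (E → Bool) → ℝ}
    (hf : ClusterMonotone ends S f) :
    ClusterMonotone (deleteEdge ends e₀) S (fun ω => f (paste e₀ false ω)) :=
  fun _ _ h => hf _ _ (by simpa only [setCluster_paste_false] using image_mono h)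

lemma ClusterMonotone.comp_paste_true {S : Set V} (h₀ : e₀ ∈ incident ends S)
    {f : (E → Bool) → ℝ} (hf : ClusterMonotone ends S f) :
    ClusterMonotone (deleteEdge ends e₀) (S ∪ {(ends e₀).1, (ends e₀).2})
      (fun ω => f (paste e₀ true ω)) :=
  fun _ _ h => hf _ _ (by
    simpa only [setCluster_paste_true h₀] using insert_subset_insert (image_mono h))

lemma paste_false_preimage_avoids (S X : Set V) :
    paste e₀ false ⁻¹' avoids ends S X = avoids (deleteEdge ends e₀) S X := by
  ext ω
  simp only [mem_preimage, avoids, mem_ofPred_eq, reachFrom_paste_false]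

lemma paste_true_preimage_avoids {S : Set V} (h₀ : e₀ ∈ incident ends S) (X : Set V) :
    paste e₀ true ⁻¹' avoids ends S X =
      avoids (deleteEdge ends e₀) (S ∪ {(ends e₀).1, (ends e₀).2}) X := by
  ext ω
  simp only [mem_preimage, avoids, mem_ofPred_eq, reachFrom_paste_true h₀]

end DeleteEdge

/-- A mixture of two positively correlated branches is positively correlated if both functions
have the larger mean in the same branch (`hu`, `hv`); all with denominators cleared. -/
lemma mixture_mul_le {w₀ w₁ P₀ P₁ u₀ u₁ v₀ v₁ c₀ c₁ : ℝ} (hw₀ : 0 ≤ w₀) (hw₁ : 0 ≤ w₁)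
    (hP₀ : 0 < P₀) (hP₁ : 0 < P₁) (h₀ : u₀ * v₀ ≤ c₀ * P₀) (h₁ : u₁ * v₁ ≤ c₁ * P₁)
    (hu : u₀ * P₁ ≤ u₁ * P₀) (hv : v₀ * P₁ ≤ v₁ * P₀) :
    (w₁ * u₁ + w₀ * u₀) * (w₁ * v₁ + w₀ * v₀) ≤ (w₁ * c₁ + w₀ * c₀) * (w₁ * P₁ + w₀ * P₀) := by
  have hcross : u₀ * v₁ + u₁ * v₀ ≤ c₀ * P₁ + c₁ * P₀ := by
    refine le_of_mul_le_mul_right ?_ (mul_pos hP₀ hP₁)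
    nlinarith [mul_nonneg (sub_nonneg.2 hu) (sub_nonneg.2 hv),
      mul_le_mul_of_nonneg_right h₀ (sq_nonneg P₁), mul_le_mul_of_nonneg_right h₁ (sq_nonneg P₀)]
  nlinarith [mul_le_mul_of_nonneg_left h₀ (mul_nonneg hw₀ hw₀),
    mul_le_mul_of_nonneg_left h₁ (mul_nonneg hw₁ hw₁),
    mul_le_mul_of_nonneg_left hcross (mul_nonneg hw₀ hw₁)]

section Induction

variable [Fintype E] [DecidableEq E] {p : E → ℝ} {ends : E → V × V}

lemma positivelyAssociated_of_forall_notMem_incident {S : Set V}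
    (h : ∀ e, e ∉ incident ends S) (X : Set V) : PositivelyAssociated p ends S X := by
  intro f g hf hg
  have hconst : ∀ {F : (E → Bool) → ℝ}, ClusterMonotone ends S F → F = fun _ => F default :=
    fun hF => funext fun ω => hF.eq_of_setCluster_eq (by
      rw [setCluster_eq_empty h, setCluster_eq_empty h])
  rw [hconst hf, hconst hg]
  simp only [weightedSum_const]
  exact le_of_eq (by ring)

theorem PositivelyAssociated.of_deleteEdge (hp : ∀ e, 0 ≤ p e ∧ p e ≤ 1) {S X : Set V} {e₀ : E}
    (h₀ : e₀ ∈ incident ends S)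
    (hclosed : PositivelyAssociated (fun e : {e // e ≠ e₀} => p e) (deleteEdge ends e₀) S X)
    (hopen : PositivelyAssociated (fun e : {e // e ≠ e₀} => p e) (deleteEdge ends e₀)
      (S ∪ {(ends e₀).1, (ends e₀).2}) X) :
    PositivelyAssociated p ends S X := by
  intro f g hf hg
  set p' : {e // e ≠ e₀} → ℝ := fun e => p e
  set ends' := deleteEdge ends e₀
  set S₁ := S ∪ {(ends e₀).1, (ends e₀).2}
  have hp' : ∀ e, 0 ≤ p' e ∧ p' e ≤ 1 := fun e => hp e
  have hsplit : ∀ h : (E → Bool) → ℝ, weightedSum p (avoids ends S X) h =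
      p e₀ * weightedSum p' (avoids ends' S₁ X) (fun ω => h (paste e₀ true ω)) +
        (1 - p e₀) * weightedSum p' (avoids ends' S X) (fun ω => h (paste e₀ false ω)) :=
    fun h => by
      rw [weightedSum_paste (e₀ := e₀), Fintype.sum_bool, paste_true_preimage_avoids h₀,
        paste_false_preimage_avoids]
      simp only [if_true, Bool.false_eq_true, if_false]
      rfl
  rw [Pr_eq_weightedSum, hsplit, hsplit, hsplit, hsplit, ← Pr_eq_weightedSum,
    ← Pr_eq_weightedSum]
  have hmeans : ∀ {F : (E → Bool) → ℝ}, ClusterMonotone ends S F →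
      weightedSum p' (avoids ends' S X) (fun ω => F (paste e₀ false ω)) * Pr p' (avoids ends' S₁ X)
        ≤ weightedSum p' (avoids ends' S₁ X) (fun ω => F (paste e₀ true ω)) *
          Pr p' (avoids ends' S X) := fun hF =>
    (hclosed.weightedSum_mul_Pr_union_le hp' hF.comp_paste_false _).trans
      (mul_le_mul_of_nonneg_right (weightedSum_mono hp' _ fun ω =>
        hF _ _ (setCluster_mono (paste_false_le_paste_true ω) S)) (Pr_nonneg hp' _))
  rcases (Pr_nonneg hp' (avoids ends' S₁ X)).eq_or_lt with hP₁ | hP₁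
  · simp only [← hP₁, weightedSum_eq_zero_of_Pr_eq_zero hp' hP₁.symm, mul_zero, zero_add]
    have := hclosed _ _ hf.comp_paste_false hg.comp_paste_false
    nlinarith [mul_le_mul_of_nonneg_left this (sq_nonneg (1 - p e₀))]
  · have hP₀ : 0 < Pr p' (avoids ends' S X) :=
      hP₁.trans_le (Pr_mono hp' (by rw [avoids_union]; exact inter_subset_left))
    exact mixture_mul_le (sub_nonneg.2 (hp e₀).2) (hp e₀).1 hP₀ hP₁
      (hclosed _ _ hf.comp_paste_false hg.comp_paste_false)
      (hopen _ _ (hf.comp_paste_true h₀) (hg.comp_paste_true h₀)) (hmeans hf) (hmeans hg)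

theorem positivelyAssociated (ends : E → V × V) (p : E → ℝ) (hp : ∀ e, 0 ≤ p e ∧ p e ≤ 1)
    (S X : Set V) : PositivelyAssociated p ends S X := by
  induction hn : Fintype.card E using Nat.strong_induction_on generalizing E S with
  | _ n ih =>
    by_cases h₀ : ∃ e₀, e₀ ∈ incident ends S
    · obtain ⟨e₀, h₀⟩ := h₀
      have hlt : Fintype.card {e // e ≠ e₀} < n := hn ▸ Fintype.card_subtype_lt (not_not.2 rfl)
      have hp' : ∀ e : {e // e ≠ e₀}, 0 ≤ p e ∧ p e ≤ 1 := fun e => hp e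
      exact .of_deleteEdge hp h₀ (ih _ hlt _ _ hp' _ rfl) (ih _ hlt _ _ hp' _ rfl)
    · exact positivelyAssociated_of_forall_notMem_incident (not_exists.1 h₀) X

end Induction

theorem stmt3_general [Fintype E] [DecidableEq E]
    (ends : E → V × V) (p : E → ℝ) (hp : ∀ e, 0 ≤ p e ∧ p e ≤ 1)
    (s : V) (X : Set V)
    (hpos : 0 < Pr p (RX ends s X))
    (f g : (E → Bool) → ℝ)
    (hf : ∀ ω ω', Cluster ends s ω ⊆ Cluster ends s ω' → f ω ≤ f ω')
    (hg : ∀ ω ω', Cluster ends s ω ⊆ Cluster ends s ω' → g ω' ≤ g ω) :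
    condExp p (fun ω => f ω * g ω) (RX ends s X) ≤
      condExp p f (RX ends s X) * condExp p g (RX ends s X) := by
  simp only [cluster_eq_setCluster] at hf hg
  have hcov := positivelyAssociated ends p hp {s} X f (fun ω => -g ω) hf
    fun ω ω' h => neg_le_neg (hg ω ω' h)
  simp only [mul_neg, weightedSum_neg] at hcov
  rw [RX_eq_avoids] at hpos ⊢
  change weightedSum p _ _ / _ ≤ weightedSum p _ _ / _ * (weightedSum p _ _ / _)
  rw [div_mul_div_comm, div_le_div_iff₀ hpos (mul_pos hpos hpos)]
  nlinarith

/-- Theorem 1.3(b). If `X ⊆ V \ {s}` with `Pr(R_X) > 0`,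
`f` is a bounded increasing function of `C_s` and `g` a bounded decreasing
function of `C_s`, then `E[f·g | R_X] ≤ E[f | R_X] · E[g | R_X]`. -/
theorem stmt3 [Fintype V] [Fintype E] [DecidableEq E]
    (ends : E → V × V) (p : E → ℝ) (hp : ∀ e, 0 ≤ p e ∧ p e ≤ 1)
    (s : V) (X : Set V) (hX : s ∉ X)
    (hpos : 0 < Pr p (RX ends s X))
    (f g : (E → Bool) → ℝ)
    (hfb : ∃ M, ∀ ω, |f ω| ≤ M) (hgb : ∃ M, ∀ ω, |g ω| ≤ M)
    (hf : ∀ ω ω', Cluster ends s ω ⊆ Cluster ends s ω' → f ω ≤ f ω')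
    (hg : ∀ ω ω', Cluster ends s ω ⊆ Cluster ends s ω' → g ω' ≤ g ω) :
    condExp p (fun ω => f ω * g ω) (RX ends s X) ≤
      condExp p f (RX ends s X) * condExp p g (RX ends s X) :=
  stmt3_general ends p hp s X hpos f g hf hg

end BondPerc
end

section
/- Let q ≥ 1, let S and T be disjoint subsets of V with φ_{G,q}(S ↛ T) > 0, and let f and g be bounded real-valued functions on {0,1}^E, each of which depends only on the pair (C_S, C_T), is increasing in C_S, and is decreasing in C_T (i.e., if C_S(ω) ⊆ C_S(ω') and C_T(ω) ⊇ C_T(ω') then f(ω) ≤ f(ω') and g(ω) ≤ g(ω')). Then, with expectations taken with respect to φ_{G,q} conditioned on {S ↛ T}, E[f·g] ≥ E[f] · E[g]. -/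
/-!
The random-cluster model on a finite graph `G = (V, E)`.
Edges are given by their endpoints `ends : E → V × V` (unordered).  With edge
parameters `p e ∈ (0,1)` and cluster parameter `q > 0`, the random-cluster
measure gives a configuration `ω : E → Bool` probability proportional to
`q ^ k(ω) · ∏_{ω e = 1} p e · ∏_{ω e = 0} (1 - p e)`, where `k(ω)` is the
number of connected components of the spanning subgraph `(V, {e : ω e = 1})`.
-/

attribute [local instance] Classical.propDecidable

namespace RandomCluster

variable {V E : Type*}

/-- One step along an open edge (in either direction, since edges are undirected). -/
def Step (ends : E → V × V) (ω : E → Bool) (u v : V) : Prop :=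
  ∃ e, ω e = true ∧ (ends e = (u, v) ∨ ends e = (v, u))

/-- `Reach ends ω u v` : there is an open path from `u` to `v` in configuration `ω`. -/
def Reach (ends : E → V × V) (ω : E → Bool) (u v : V) : Prop :=
  Relation.ReflTransGen (Step ends ω) u v

/-- The number of connected components `k(ω)` of the spanning subgraph
`(V, {e : ω e = 1})`: the number of classes of the equivalence relation
generated by open adjacency. -/
noncomputable def numComp (ends : E → V × V) (ω : E → Bool) : ℕ :=
  Nat.card (Quot (Step ends ω))

/-- The open cluster `C_A(ω)` of a set of vertices `A`: the set of edges lying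
on some open path starting at a vertex of `A`. -/
def ClusterOf (ends : E → V × V) (A : Set V) (ω : E → Bool) : Set E :=
  {e | ω e = true ∧ ∃ a ∈ A, (Reach ends ω a (ends e).1 ∨ Reach ends ω a (ends e).2)}

/-- The event `{A ↛ B}` that no open path joins a vertex of `A` to a vertex of `B`. -/
def NoConn (ends : E → V × V) (A B : Set V) : Set (E → Bool) :=
  {ω | ∀ a ∈ A, ∀ b ∈ B, ¬ Reach ends ω a b}

/-- The (unnormalized) random-cluster weight of a configuration. -/
noncomputable def rcWeight [Fintype E] (ends : E → V × V) (p : E → ℝ) (q : ℝ)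
    (ω : E → Bool) : ℝ :=
  q ^ numComp ends ω * ∏ e, if ω e then p e else 1 - p e

/-- The random-cluster probability of a single configuration:
`φ_{G,q}(ω) = rcWeight ω / Z`. -/
noncomputable def rcProb [Fintype E] [DecidableEq E] (ends : E → V × V)
    (p : E → ℝ) (q : ℝ) (ω : E → Bool) : ℝ :=
  rcWeight ends p q ω / ∑ ω' : E → Bool, rcWeight ends p q ω'

/-- The random-cluster probability `φ_{G,q}(A)` of an event `A ⊆ {0,1}^E`. -/
noncomputable def rcPr [Fintype E] [DecidableEq E] (ends : E → V × V)
    (p : E → ℝ) (q : ℝ) (A : Set (E → Bool)) : ℝ :=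
  (∑ ω : E → Bool, A.indicator (rcWeight ends p q) ω) /
    ∑ ω : E → Bool, rcWeight ends p q ω

/-- Conditional probability `φ_{G,q}(A | B)`. -/
noncomputable def rcCondPr [Fintype E] [DecidableEq E] (ends : E → V × V)
    (p : E → ℝ) (q : ℝ) (A B : Set (E → Bool)) : ℝ :=
  rcPr ends p q (A ∩ B) / rcPr ends p q B

/-- Conditional expectation `E_{φ_{G,q}}[f | B]`. -/
noncomputable def rcCondExp [Fintype E] [DecidableEq E] (ends : E → V × V)
    (p : E → ℝ) (q : ℝ) (f : (E → Bool) → ℝ) (B : Set (E → Bool)) : ℝ :=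
  (∑ ω : E → Bool, B.indicator (fun ω' => rcWeight ends p q ω' * f ω') ω) /
    ∑ ω : E → Bool, B.indicator (rcWeight ends p q) ω

/-!
By induction on the set `A` of free edges, the edges outside `A` being frozen to a boundary
configuration `β`, the measure restricted to `{S ↛ T}` satisfies the correlation inequality.
If a free edge `e = {x, y}` has an endpoint `x` in the `S`-cluster of the configuration with all
free edges closed, split on `e`. Opening `e` enlarges `C_S` and, on `{S ↛ T}`, does not enlarge
`C_T`. The weight ratio `φ(ω ∪ e) / φ(ω)` is `p / (1 - p)`, divided by `q` if `x` and `y` are not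
yet connected; for `q ≥ 1` it is therefore increasing in `(C_S, -C_T)`, as is the event that
opening `e` keeps `S ↛ T`. By the induction hypothesis, applied to this ratio, the half with `e`
open dominates the half with `e` closed, and a mixture of two positively correlated measures
ordered in this way is positively correlated. An edge at the `T`-cluster is handled symmetrically
(swap `S` and `T`, negate `f` and `g`); if no free edge touches either cluster, both clusters,
hence `f` and `g`, are constant on the slice.
-/

variable {ends : E → V × V} {ω ω' : E → Bool} {u v x y : V}

lemma Step.symm (h : Step ends ω u v) : Step ends ω v u :=
  let ⟨e, he, hends⟩ := h
  ⟨e, he, hends.symm⟩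

instance : Std.Symm (Step ends ω) := ⟨fun _ _ => Step.symm⟩

lemma Reach.symm (h : Reach ends ω u v) : Reach ends ω v u :=
  Std.Symm.symm (r := Relation.ReflTransGen (Step ends ω)) _ _ h

lemma Step.mono (hle : ω ≤ ω') (h : Step ends ω u v) : Step ends ω' u v :=
  let ⟨e, he, hends⟩ := h
  ⟨e, Bool.le_iff_imp.1 (hle e) he, hends⟩

lemma Reach.mono (hle : ω ≤ ω') (h : Reach ends ω u v) : Reach ends ω' u v :=
  Relation.ReflTransGen.mono (fun _ _ => Step.mono hle) _ _ h

lemma clusterOf_mono (hle : ω ≤ ω') (A : Set V) :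
    ClusterOf ends A ω ⊆ ClusterOf ends A ω' := by
  rintro e ⟨he, a, ha, hr⟩
  exact ⟨Bool.le_iff_imp.1 (hle e) he, a, ha, hr.imp (Reach.mono hle) (Reach.mono hle)⟩

lemma mem_noConn_of_le {S T : Set V} (hle : ω ≤ ω') (h : ω' ∈ NoConn ends S T) :
    ω ∈ NoConn ends S T :=
  fun a ha b hb hr => h a ha b hb (hr.mono hle)

lemma noConn_comm (S T : Set V) : NoConn ends S T = NoConn ends T S := by
  ext ω
  exact ⟨fun h b hb a ha hr => h a ha b hb hr.symm, fun h a ha b hb hr => h b hb a ha hr.symm⟩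

/-- A path from `u` inside the `A`-cluster of `ω` only uses edges of that cluster. -/
lemma Reach.of_clusterOf_subset {A : Set V} {a : V} (ha : a ∈ A) (hau : Reach ends ω a u)
    (huv : Reach ends ω u v) (hsub : ClusterOf ends A ω ⊆ ClusterOf ends A ω') :
    Reach ends ω' u v := by
  induction huv with
  | refl => exact .refl
  | @tail w z hw hstep ih =>
    obtain ⟨e, he, hends⟩ := hstep
    have hmem : e ∈ ClusterOf ends A ω := by
      refine ⟨he, a, ha, ?_⟩
      rcases hends with h | h <;> rw [h]
      exacts [Or.inl (hau.trans hw), Or.inr (hau.trans hw)]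
    exact ih.tail ⟨e, (hsub hmem).1, hends⟩

lemma quot_mk_eq_iff_reach :
    Quot.mk (Step ends ω) u = Quot.mk (Step ends ω) v ↔ Reach ends ω u v := by
  rw [Quot.eq, Relation.EqvGen.eqvGen_eq_reflTransGen]
  rfl

lemma numComp_congr (h : ∀ u v, Reach ends ω u v ↔ Reach ends ω' u v) :
    numComp ends ω = numComp ends ω' :=
  Nat.card_congr
    { toFun := Quot.lift (Quot.mk _) fun u v huv =>
        quot_mk_eq_iff_reach.2 ((h u v).1 (.single huv))
      invFun := Quot.lift (Quot.mk _) fun u v huv =>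
        quot_mk_eq_iff_reach.2 ((h u v).2 (.single huv))
      left_inv := by rintro ⟨u⟩; rfl
      right_inv := by rintro ⟨u⟩; rfl }

section OpenEdge

variable [DecidableEq E] {e : E}

lemma le_update_true (ω : E → Bool) (e : E) : ω ≤ Function.update ω e true :=
  le_update_self_iff.2 le_top

lemma step_update_true (hxy : ends e = (x, y) ∨ ends e = (y, x))
    (h : Step ends (Function.update ω e true) u v) :
    Step ends ω u v ∨ (u = x ∧ v = y) ∨ (u = y ∧ v = x) := by
  obtain ⟨e', he', hends⟩ := h
  by_cases hee : e' = e
  · subst hee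
    right
    rcases hxy with h1 | h1 <;> rcases hends with h2 | h2 <;>
      rw [h1] at h2 <;> cases h2 <;> simp
  · rw [Function.update_of_ne hee] at he'
    exact Or.inl ⟨e', he', hends⟩

lemma reach_update_true (hxy : ends e = (x, y) ∨ ends e = (y, x))
    (h : Reach ends (Function.update ω e true) u v) :
    Reach ends ω u v ∨ (Reach ends ω u x ∧ Reach ends ω y v) ∨
      (Reach ends ω u y ∧ Reach ends ω x v) := by
  induction h with
  | refl => exact Or.inl .refl
  | tail _ hstep ih =>
    rcases step_update_true hxy hstep with hs | ⟨rfl, rfl⟩ | ⟨rfl, rfl⟩ <;>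
      rcases ih with h1 | ⟨h1, h2⟩ | ⟨h1, h2⟩
    · exact Or.inl (h1.tail hs)
    · exact Or.inr (Or.inl ⟨h1, h2.tail hs⟩)
    · exact Or.inr (Or.inr ⟨h1, h2.tail hs⟩)
    · exact Or.inr (Or.inl ⟨h1, .refl⟩)
    · exact Or.inr (Or.inl ⟨h1, .refl⟩)
    · exact Or.inl h1
    · exact Or.inr (Or.inr ⟨h1, .refl⟩)
    · exact Or.inl h1
    · exact Or.inr (Or.inr ⟨h1, .refl⟩)

lemma reach_update_true_iff (hxy : ends e = (x, y) ∨ ends e = (y, x))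
    (hconn : Reach ends ω x y) :
    Reach ends (Function.update ω e true) u v ↔ Reach ends ω u v := by
  refine ⟨fun h => ?_, Reach.mono (le_update_true ω e)⟩
  rcases reach_update_true hxy h with h | ⟨hux, hyv⟩ | ⟨huy, hxv⟩
  · exact h
  · exact (hux.trans hconn).trans hyv
  · exact (huy.trans hconn.symm).trans hxv

lemma numComp_eq_numComp_update_true [Finite V]
    (hxy : ends e = (x, y) ∨ ends e = (y, x)) :
    numComp ends ω =
      numComp ends (Function.update ω e true) + if Reach ends ω x y then 0 else 1 := by
  split_ifs with hconn
  · exact numComp_congr fun u v => (reach_update_true_iff hxy hconn).symm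
  set Y := Quot.mk (Step ends ω) y
  have hXY : Quot.mk (Step ends ω) x ≠ Y := fun h => hconn (quot_mk_eq_iff_reach.1 h)
  let π : {z : Quot (Step ends ω) // z ≠ Y} → Quot (Step ends (Function.update ω e true)) :=
    fun z => Quot.map id (fun _ _ => Step.mono (le_update_true ω e)) z.1
  have hπ : Function.Bijective π := by
    constructor
    · rintro ⟨⟨a⟩, ha⟩ ⟨⟨b⟩, hb⟩ hab
      have hab : Reach ends (Function.update ω e true) a b := quot_mk_eq_iff_reach.1 hab
      rcases reach_update_true hxy hab with h | ⟨_, hyb⟩ | ⟨hay, _⟩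
      · exact Subtype.ext (quot_mk_eq_iff_reach.2 h)
      · exact absurd (quot_mk_eq_iff_reach.2 hyb).symm hb
      · exact absurd (quot_mk_eq_iff_reach.2 hay) ha
    · rintro ⟨v⟩
      by_cases hv : Quot.mk (Step ends ω) v = Y
      · refine ⟨⟨_, hXY⟩, quot_mk_eq_iff_reach.2 ?_⟩
        have hyv := (quot_mk_eq_iff_reach.1 hv.symm).mono (le_update_true ω e)
        exact Relation.ReflTransGen.head ⟨e, Function.update_self .., hxy⟩ hyv
      · exact ⟨⟨_, hv⟩, rfl⟩
  change Nat.card (Quot (Step ends ω)) = Nat.card (Quot _) + 1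
  rw [← Nat.card_congr (Equiv.ofBijective π hπ), ← Finite.card_option,
    Nat.card_congr (Equiv.optionSubtypeNe Y)]

end OpenEdge

section Weight

variable [Fintype E] {p : E → ℝ} {q : ℝ}

lemma rcWeight_pos (hp : ∀ e, 0 < p e ∧ p e < 1) (hq : 0 < q) (ω : E → Bool) :
    0 < rcWeight ends p q ω := by
  refine mul_pos (pow_pos hq _) (Finset.prod_pos fun e _ => ?_)
  split_ifs
  exacts [(hp e).1, sub_pos.2 (hp e).2]

lemma rcWeight_update_true_div [Finite V] [DecidableEq E] {e : E}
    (hp : ∀ e, 0 < p e ∧ p e < 1) (hq : 0 < q) (hxy : ends e = (x, y) ∨ ends e = (y, x))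
    (he : ω e = false) :
    rcWeight ends p q (Function.update ω e true) / rcWeight ends p q ω =
      p e / ((1 - p e) * q ^ (if Reach ends ω x y then 0 else 1)) := by
  have hpe := hp e
  rw [div_eq_div_iff (rcWeight_pos hp hq ω).ne' (by have := sub_pos.2 hpe.2; positivity)]
  have hrest : ∏ e' ∈ Finset.univ.erase e,
      (if Function.update ω e true e' then p e' else 1 - p e') =
      ∏ e' ∈ Finset.univ.erase e, (if ω e' then p e' else 1 - p e') :=
    Finset.prod_congr rfl fun e' he' => by
      rw [Function.update_of_ne (Finset.ne_of_mem_erase he')]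
  simp only [rcWeight, ← Finset.mul_prod_erase Finset.univ _ (Finset.mem_univ e), hrest,
    Function.update_self, he, numComp_eq_numComp_update_true (ω := ω) hxy, pow_add]
  simp only [if_true, Bool.false_eq_true, if_false]
  ring

end Weight

section WeightedSum

variable {Ω : Type*} [Fintype Ω] (w : Ω → ℝ)

noncomputable def weightedSum (D : Set Ω) (h : Ω → ℝ) : ℝ :=
  ∑ ω, D.indicator (fun ω => w ω * h ω) ω

def PosCorrelated (D : Set Ω) (f g : Ω → ℝ) : Prop :=
  weightedSum w D f * weightedSum w D g ≤ weightedSum w D (f * g) * weightedSum w D 1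

variable {w} {D D₀ D₁ : Set Ω} {f g h r : Ω → ℝ}

lemma weightedSum_neg : weightedSum w D (-f) = -weightedSum w D f := by
  simp only [weightedSum, Pi.neg_apply, mul_neg, Set.indicator_neg, Finset.sum_neg_distrib]

lemma weightedSum_mono (hw : 0 ≤ w) (hfg : ∀ ω ∈ D, f ω ≤ g ω) :
    weightedSum w D f ≤ weightedSum w D g :=
  Finset.sum_le_sum fun ω _ => by
    by_cases hω : ω ∈ D
    · simpa only [Set.indicator_of_mem hω] using mul_le_mul_of_nonneg_left (hfg ω hω) (hw ω)
    · simp only [Set.indicator_of_notMem hω, le_refl]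

lemma weightedSum_nonneg (hw : 0 ≤ w) (hf : ∀ ω ∈ D, 0 ≤ f ω) : 0 ≤ weightedSum w D f := by
  simpa [weightedSum] using weightedSum_mono (f := 0) hw hf

lemma weightedSum_union (hD : Disjoint D₁ D₀) (f : Ω → ℝ) :
    weightedSum w (D₁ ∪ D₀) f = weightedSum w D₁ f + weightedSum w D₀ f := by
  simp only [weightedSum, Set.indicator_union_of_disjoint hD, Finset.sum_add_distrib]

lemma weightedSum_eq_zero_of_weightedSum_one (hw : 0 ≤ w) (h₀ : weightedSum w D 1 = 0)
    (f : Ω → ℝ) : weightedSum w D f = 0 := by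
  have hw₀ : ∀ ω ∈ D, w ω = 0 := fun ω hω => by
    have := (Finset.sum_eq_zero_iff_of_nonneg fun ω _ =>
      Set.indicator_nonneg (fun ω _ => by simpa using hw ω) ω).1 h₀ ω (Finset.mem_univ ω)
    simpa [Set.indicator_of_mem hω] using this
  refine Finset.sum_eq_zero fun ω _ => ?_
  by_cases hω : ω ∈ D <;> simp [hω, hw₀]

lemma weightedSum_eq_const_mul {c : ℝ} (hf : ∀ ω ∈ D, f ω = c) :
    weightedSum w D f = c * weightedSum w D 1 := by
  simp only [weightedSum, Finset.mul_sum]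
  refine Finset.sum_congr rfl fun ω _ => ?_
  by_cases hω : ω ∈ D <;> simp [hω, hf, mul_comm]

lemma PosCorrelated.neg (hfg : PosCorrelated w D f g) : PosCorrelated w D (-f) (-g) := by
  simpa only [PosCorrelated, weightedSum_neg, neg_mul_neg] using hfg

lemma posCorrelated_of_const (hf : ∀ ω ∈ D, ∀ ω' ∈ D, f ω = f ω')
    (hg : ∀ ω ∈ D, ∀ ω' ∈ D, g ω = g ω') : PosCorrelated w D f g := by
  rcases D.eq_empty_or_nonempty with rfl | ⟨ω₀, hω₀⟩
  · simp [PosCorrelated, weightedSum]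
  rw [PosCorrelated, weightedSum_eq_const_mul (fun ω hω => hf ω hω ω₀ hω₀),
    weightedSum_eq_const_mul (fun ω hω => hg ω hω ω₀ hω₀),
    weightedSum_eq_const_mul (f := f * g)
      (fun ω hω => by rw [Pi.mul_apply, hf ω hω ω₀ hω₀, hg ω hω ω₀ hω₀])]
  exact le_of_eq (by ring)

lemma PosCorrelated.union (hw : 0 ≤ w) (hD : Disjoint D₁ D₀) (h₁ : PosCorrelated w D₁ f g)
    (h₀ : PosCorrelated w D₀ f g)
    (hf : weightedSum w D₀ f * weightedSum w D₁ 1 ≤ weightedSum w D₁ f * weightedSum w D₀ 1)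
    (hg : weightedSum w D₀ g * weightedSum w D₁ 1 ≤ weightedSum w D₁ g * weightedSum w D₀ 1) :
    PosCorrelated w (D₁ ∪ D₀) f g := by
  unfold PosCorrelated at *
  simp only [weightedSum_union hD]
  rcases (weightedSum_nonneg hw (D := D₁) (f := 1) fun _ _ => zero_le_one).eq_or_lt
    with hz₁ | hz₁
  · simpa [weightedSum_eq_zero_of_weightedSum_one hw hz₁.symm] using h₀
  rcases (weightedSum_nonneg hw (D := D₀) (f := 1) fun _ _ => zero_le_one).eq_or_lt
    with hz₀ | hz₀
  · simpa [weightedSum_eq_zero_of_weightedSum_one hw hz₀.symm] using h₁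
  -- with `zᵢ = weightedSum w Dᵢ 1` and `aᵢ, bᵢ` the means of `f, g` on `Dᵢ`, the gap left
  -- after `h₀` and `h₁` is `z₀ z₁ (a₁ - a₀) (b₁ - b₀) ≥ 0`
  nlinarith [mul_nonneg (sub_nonneg.2 hf) (sub_nonneg.2 hg), mul_pos hz₀ hz₁,
    mul_le_mul_of_nonneg_right h₁ (mul_pos hz₀ hz₀).le,
    mul_le_mul_of_nonneg_right h₀ (mul_pos hz₁ hz₁).le,
    mul_le_mul_of_nonneg_right h₁ (mul_pos hz₀ hz₁).le,
    mul_le_mul_of_nonneg_right h₀ (mul_pos hz₀ hz₁).le]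

/-- Read with `μ₀ = w · 1_D` and `μ₁` the image of `r μ₀` under `σ`, this says that `h` has a
larger mean under `μ₁` than under `μ₀`. -/
lemma weightedSum_mul_le_of_posCorrelated (hw : 0 ≤ w) (hr : 0 ≤ r) {σ : Ω → Ω}
    (hσ : ∀ ω ∈ D, r ω ≠ 0 → h ω ≤ h (σ ω)) (hc : PosCorrelated w D h r) :
    weightedSum w D h * weightedSum w D r ≤
      weightedSum w D (fun ω => r ω * h (σ ω)) * weightedSum w D 1 := by
  refine hc.trans (mul_le_mul_of_nonneg_right (weightedSum_mono hw fun ω hω => ?_)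
    (weightedSum_nonneg hw fun _ _ => zero_le_one))
  rcases (hr ω).eq_or_lt with h0 | hpos
  · simp [← h0]
  · rw [Pi.mul_apply, mul_comm]
    exact mul_le_mul_of_nonneg_left (hσ ω hω hpos.ne') hpos.le

lemma PosCorrelated.div_mul_div_le (hfg : PosCorrelated w D f g)
    (hD : 0 < weightedSum w D 1) :
    weightedSum w D f / weightedSum w D 1 * (weightedSum w D g / weightedSum w D 1) ≤
      weightedSum w D (f * g) / weightedSum w D 1 := by
  rw [div_mul_div_comm, div_le_div_iff₀ (mul_pos hD hD) hD]
  nlinarith [mul_le_mul_of_nonneg_right hfg hD.le]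

end WeightedSum

section Slice

variable {S T X : Set V} {A : Finset E} {β : E → Bool} {D D' : Set (E → Bool)}
  {f : (E → Bool) → ℝ}

def Slice (ends : E → V × V) (S T : Set V) (A : Finset E) (β : E → Bool) : Set (E → Bool) :=
  {ω | ∀ e ∉ A, ω e = β e} ∩ NoConn ends S T

def ClusterMonotoneOn (ends : E → V × V) (S T : Set V) (D : Set (E → Bool))
    (f : (E → Bool) → ℝ) : Prop :=
  ∀ ω ∈ D, ∀ ω' ∈ D, ClusterOf ends S ω ⊆ ClusterOf ends S ω' →
    ClusterOf ends T ω' ⊆ ClusterOf ends T ω → f ω ≤ f ω'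

lemma ClusterMonotoneOn.mono (hf : ClusterMonotoneOn ends S T D f) (h : D' ⊆ D) :
    ClusterMonotoneOn ends S T D' f :=
  fun ω hω ω' hω' => hf ω (h hω) ω' (h hω')

lemma ClusterMonotoneOn.neg_swap (hf : ClusterMonotoneOn ends S T D f) :
    ClusterMonotoneOn ends T S D (-f) :=
  fun ω hω ω' hω' hT hS => neg_le_neg (hf ω' hω' ω hω hS hT)

lemma ClusterMonotoneOn.eq (hf : ClusterMonotoneOn ends S T D f) (hω : ω ∈ D) (hω' : ω' ∈ D)
    (hS : ClusterOf ends S ω = ClusterOf ends S ω')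
    (hT : ClusterOf ends T ω = ClusterOf ends T ω') : f ω = f ω' :=
  le_antisymm (hf ω hω ω' hω' hS.le hT.ge) (hf ω' hω' ω hω hS.ge hT.le)

lemma slice_comm : Slice ends S T A β = Slice ends T S A β := by
  rw [Slice, Slice, noConn_comm]

lemma slice_univ [Fintype E] : Slice ends S T Finset.univ β = NoConn ends S T := by
  simp [Slice]

variable [DecidableEq E] {e : E}

def closeOn (A : Finset E) (β : E → Bool) : E → Bool :=
  fun e => if e ∈ A then false else β e

lemma closeOn_le (hω : ∀ e ∉ A, ω e = β e) : closeOn A β ≤ ω := by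
  intro e
  unfold closeOn
  split_ifs with he
  exacts [Bool.false_le _, (hω e he).ge]

def TouchesFreeEdge (ends : E → V × V) (X : Set V) (A : Finset E) (β : E → Bool) : Prop :=
  ∃ e ∈ A, ∃ x y, (ends e = (x, y) ∨ ends e = (y, x)) ∧ ∃ a ∈ X, Reach ends (closeOn A β) a x

lemma reach_closeOn_of_not_touchesFreeEdge (hX : ¬ TouchesFreeEdge ends X A β)
    (hω : ∀ e ∉ A, ω e = β e) {a : V} (ha : a ∈ X) (h : Reach ends ω a v) :
    Reach ends (closeOn A β) a v := by
  induction h with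
  | refl => exact .refl
  | @tail u w _ hstep ih =>
    obtain ⟨e, he, hends⟩ := hstep
    have heA : e ∉ A := fun heA => hX ⟨e, heA, u, w, hends, a, ha, ih⟩
    refine ih.tail ⟨e, ?_, hends⟩
    rwa [closeOn, if_neg heA, ← hω e heA]

lemma clusterOf_eq_of_not_touchesFreeEdge (hX : ¬ TouchesFreeEdge ends X A β)
    (hω : ∀ e ∉ A, ω e = β e) : ClusterOf ends X ω = ClusterOf ends X (closeOn A β) := by
  refine subset_antisymm ?_ (clusterOf_mono (closeOn_le hω) X)
  rintro e ⟨he, a, ha, hr⟩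
  have hr' := hr.imp (reach_closeOn_of_not_touchesFreeEdge hX hω ha)
    (reach_closeOn_of_not_touchesFreeEdge hX hω ha)
  have heA : e ∉ A := fun heA => hX <| by
    rcases hr' with h | h
    exacts [⟨e, heA, _, _, Or.inl rfl, a, ha, h⟩, ⟨e, heA, _, _, Or.inr rfl, a, ha, h⟩]
  refine ⟨?_, a, ha, hr'⟩
  rwa [closeOn, if_neg heA, ← hω e heA]

lemma mem_slice_erase_update_iff (he : e ∈ A) {b : Bool} :
    ω ∈ Slice ends S T (A.erase e) (Function.update β e b) ↔ ω e = b ∧ ω ∈ Slice ends S T A β := by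
  simp only [Slice, Set.mem_inter_iff, Set.mem_ofPred_eq, Finset.mem_erase, not_and_or, not_not]
  constructor
  · rintro ⟨hω, hN⟩
    refine ⟨by simpa using hω e (Or.inl rfl), fun e' he' => ?_, hN⟩
    have hne : e' ≠ e := fun h => he' (h ▸ he)
    simpa [Function.update_of_ne hne] using hω e' (Or.inr he')
  · rintro ⟨hb, hω, hN⟩
    refine ⟨fun e' he' => ?_, hN⟩
    by_cases hne : e' = e
    · subst hne; simpa using hb
    · rw [Function.update_of_ne hne]
      exact hω e' (he'.resolve_left hne)

lemma update_mem_slice_iff (he : e ∈ A) {b : Bool} :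
    Function.update ω e b ∈ Slice ends S T A β ↔
      (∀ e' ∉ A, ω e' = β e') ∧ Function.update ω e b ∈ NoConn ends S T := by
  refine and_congr_left' (forall₂_congr fun e' he' => ?_)
  rw [Function.update_of_ne (ne_of_mem_of_not_mem he he').symm]

lemma ClusterMonotoneOn.eq_of_not_touchesFreeEdge
    (hf : ClusterMonotoneOn ends S T (Slice ends S T A β) f) (hS : ¬ TouchesFreeEdge ends S A β)
    (hT : ¬ TouchesFreeEdge ends T A β) (hω : ω ∈ Slice ends S T A β)
    (hω' : ω' ∈ Slice ends S T A β) : f ω = f ω' :=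
  hf.eq hω hω'
    (by rw [clusterOf_eq_of_not_touchesFreeEdge hS hω.1,
      clusterOf_eq_of_not_touchesFreeEdge hS hω'.1])
    (by rw [clusterOf_eq_of_not_touchesFreeEdge hT hω.1,
      clusterOf_eq_of_not_touchesFreeEdge hT hω'.1])

lemma slice_eq_union (he : e ∈ A) :
    Slice ends S T A β = Slice ends S T (A.erase e) (Function.update β e true) ∪
      Slice ends S T (A.erase e) (Function.update β e false) := by
  ext ω
  simp only [Set.mem_union, mem_slice_erase_update_iff he]
  cases ω e <;> simp

lemma disjoint_slice_update :
    Disjoint (Slice ends S T (A.erase e) (Function.update β e true))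
      (Slice ends S T (A.erase e) (Function.update β e false)) := by
  refine Set.disjoint_left.2 fun ω h₁ h₀ => ?_
  have h₁ := h₁.1 e (Finset.notMem_erase e A)
  have h₀ := h₀.1 e (Finset.notMem_erase e A)
  simp_all

end Slice

section OpeningStep

variable [DecidableEq E] {S T : Set V} {e : E} {a : V}

lemma clusterOf_update_true_subset (hxy : ends e = (x, y) ∨ ends e = (y, x)) (ha : a ∈ S)
    (hax : Reach ends ω a x) (hω : ω ∈ NoConn ends S T)
    (hup : Function.update ω e true ∈ NoConn ends S T) :
    ClusterOf ends T (Function.update ω e true) ⊆ ClusterOf ends T ω := by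
  rintro e' ⟨he', t, ht, hr⟩
  have hle := le_update_true ω e
  have htx : ¬ Reach ends ω t x := fun h => hω a ha t ht (hax.trans h.symm)
  have hty : ¬ Reach ends ω t y := fun h =>
    hup a ha t ht (((hax.mono hle).tail ⟨e, Function.update_self .., hxy⟩).trans (h.mono hle).symm)
  have hreach : ∀ v, Reach ends (Function.update ω e true) t v → Reach ends ω t v := fun v h => by
    rcases reach_update_true hxy h with h | ⟨h, _⟩ | ⟨h, _⟩
    exacts [h, absurd h htx, absurd h hty]
  have hne : e' ≠ e := by
    rintro rfl
    rcases hxy with h | h <;> rw [h] at hr <;> rcases hr with hr | hr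
    exacts [htx (hreach _ hr), hty (hreach _ hr), hty (hreach _ hr), htx (hreach _ hr)]
  rw [Function.update_of_ne hne] at he'
  exact ⟨he', t, ht, hr.imp (hreach _) (hreach _)⟩

lemma update_true_mem_noConn (hxy : ends e = (x, y) ∨ ends e = (y, x)) (ha : a ∈ S)
    (hax : Reach ends ω a x) (hω : ω ∈ NoConn ends S T)
    (hup : Function.update ω e true ∈ NoConn ends S T) (hω' : ω' ∈ NoConn ends S T)
    (hT : ClusterOf ends T ω' ⊆ ClusterOf ends T ω) :
    Function.update ω' e true ∈ NoConn ends S T := by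
  intro a' ha' t ht h
  have hT' : ∀ {v}, Reach ends ω' v t → Reach ends ω t v := fun h =>
    Reach.of_clusterOf_subset ht .refl h.symm hT
  rcases reach_update_true hxy h with h | ⟨_, hyt⟩ | ⟨_, hxt⟩
  · exact hω' a' ha' t ht h
  · have hle := le_update_true ω e
    exact hup a ha t ht
      (((hax.mono hle).tail ⟨e, Function.update_self .., hxy⟩).trans ((hT' hyt).mono hle).symm)
  · exact hω a ha t ht (hax.trans (hT' hxt).symm)

variable [Fintype E] {p : E → ℝ} {q : ℝ} {A : Finset E} {β : E → Bool}

/-- The density, relative to the slice with `e` closed, of the slice with `e` open pulled back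
along `ξ ↦ ξ[e ↦ 1]`. -/
noncomputable def openingRatio (ends : E → V × V) (p : E → ℝ) (q : ℝ) (S T : Set V) (e : E)
    (ξ : E → Bool) : ℝ :=
  (NoConn ends S T).indicator (rcWeight ends p q) (Function.update ξ e true) / rcWeight ends p q ξ

lemma openingRatio_nonneg (hp : ∀ e, 0 < p e ∧ p e < 1) (hq : 0 < q) (ξ : E → Bool) :
    0 ≤ openingRatio ends p q S T e ξ :=
  div_nonneg (Set.indicator_nonneg (fun ω _ => (rcWeight_pos hp hq ω).le) _)
    (rcWeight_pos hp hq ξ).le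

lemma weightedSum_slice_update_true (hp : ∀ e, 0 < p e ∧ p e < 1) (hq : 0 < q) (he : e ∈ A)
    (h : (E → Bool) → ℝ) :
    weightedSum (rcWeight ends p q) (Slice ends S T (A.erase e) (Function.update β e true)) h =
      weightedSum (rcWeight ends p q) (Slice ends S T (A.erase e) (Function.update β e false))
        (fun ξ => openingRatio ends p q S T e ξ * h (Function.update ξ e true)) := by
  have hflip : Function.Involutive fun ξ : E → Bool => Function.update ξ e (!ξ e) := by
    intro ξ
    ext e'
    by_cases hne : e' = e
    · subst hne; simp
    · simp [Function.update_of_ne hne]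
  refine (Fintype.sum_bijective _ hflip.bijective _ _ fun ξ => ?_).symm
  rcases hξ : ξ e
  · have hup : Function.update ξ e (!false) = Function.update ξ e true := rfl
    simp only [hup, Set.indicator_apply, mem_slice_erase_update_iff he, Function.update_self,
      hξ, true_and]
    by_cases hmem : Function.update ξ e true ∈ NoConn ends S T
    · have hξN : ξ ∈ Slice ends S T A β ↔ Function.update ξ e true ∈ Slice ends S T A β := by
        rw [update_mem_slice_iff he]
        simp [Slice, hmem, mem_noConn_of_le (le_update_true ξ e) hmem]
      simp only [← hξN, openingRatio, Set.indicator_of_mem hmem]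
      split_ifs
      · field_simp [(rcWeight_pos hp hq ξ).ne']
      · rfl
    · have hslice : Function.update ξ e true ∉ Slice ends S T A β := fun h => hmem h.2
      simp [hslice, openingRatio, Set.indicator_of_notMem hmem]
  · simp [mem_slice_erase_update_iff he, hξ]

end OpeningStep

section Induction

variable [Fintype E] [DecidableEq E] {p : E → ℝ} {q : ℝ} {S T : Set V} {A : Finset E}
  {β : E → Bool} {e : E} {a : V}

lemma openingRatio_clusterMonotoneOn [Finite V] (hp : ∀ e, 0 < p e ∧ p e < 1) (hq : 1 ≤ q)
    (he : e ∈ A) (hxy : ends e = (x, y) ∨ ends e = (y, x)) (ha : a ∈ S)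
    (hreach : Reach ends (closeOn A β) a x) :
    ClusterMonotoneOn ends S T (Slice ends S T (A.erase e) (Function.update β e false))
      (openingRatio ends p q S T e) := by
  intro ξ hξ ξ' hξ' hS hT
  rw [mem_slice_erase_update_iff he] at hξ hξ'
  have hq₀ : 0 < q := zero_lt_one.trans_le hq
  have hax : Reach ends ξ a x := hreach.mono (closeOn_le hξ.2.1)
  by_cases hup : Function.update ξ e true ∈ NoConn ends S T
  · have hup' := update_true_mem_noConn hxy ha hax hξ.2.2 hup hξ'.2.2 hT
    have hxy' : Reach ends ξ x y → Reach ends ξ' x y := fun h =>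
      Reach.of_clusterOf_subset ha hax h hS
    simp only [openingRatio, Set.indicator_of_mem hup, Set.indicator_of_mem hup',
      rcWeight_update_true_div hp hq₀ hxy hξ.1, rcWeight_update_true_div hp hq₀ hxy hξ'.1]
    have hpe := hp e
    have hp₁ : 0 < 1 - p e := sub_pos.2 hpe.2
    refine div_le_div_of_nonneg_left hpe.1.le (by positivity)
      (mul_le_mul_of_nonneg_left (pow_le_pow_right₀ hq ?_) hp₁.le)
    split_ifs <;> simp_all
  · simp only [openingRatio, Set.indicator_of_notMem hup, zero_div]
    exact openingRatio_nonneg hp hq₀ ξ'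

lemma weightedSum_slice_mul_le (hp : ∀ e, 0 < p e ∧ p e < 1) (hq : 0 < q) (he : e ∈ A)
    (hxy : ends e = (x, y) ∨ ends e = (y, x)) (ha : a ∈ S)
    (hreach : Reach ends (closeOn A β) a x) {h : (E → Bool) → ℝ}
    (hh : ClusterMonotoneOn ends S T (Slice ends S T A β) h)
    (hc : PosCorrelated (rcWeight ends p q)
      (Slice ends S T (A.erase e) (Function.update β e false)) h (openingRatio ends p q S T e)) :
    weightedSum (rcWeight ends p q) (Slice ends S T (A.erase e) (Function.update β e false)) h *
        weightedSum (rcWeight ends p q)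
          (Slice ends S T (A.erase e) (Function.update β e true)) 1 ≤
      weightedSum (rcWeight ends p q) (Slice ends S T (A.erase e) (Function.update β e true)) h *
        weightedSum (rcWeight ends p q)
          (Slice ends S T (A.erase e) (Function.update β e false)) 1 := by
  simp only [weightedSum_slice_update_true hp hq he, Pi.one_apply, mul_one]
  refine weightedSum_mul_le_of_posCorrelated (fun ω => (rcWeight_pos hp hq ω).le)
    (openingRatio_nonneg hp hq) (fun ξ hξ hr => ?_) hc
  rw [mem_slice_erase_update_iff he] at hξ
  have hup : Function.update ξ e true ∈ NoConn ends S T := by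
    by_contra hN
    exact hr (by simp [openingRatio, Set.indicator_of_notMem hN])
  exact hh ξ hξ.2 _ ((update_mem_slice_iff he).2 ⟨hξ.2.1, hup⟩)
    (clusterOf_mono (le_update_true ξ e) S)
    (clusterOf_update_true_subset hxy ha (hreach.mono (closeOn_le hξ.2.1)) hξ.2.2 hup)

lemma posCorrelated_slice_of_touches [Finite V] (hp : ∀ e, 0 < p e ∧ p e < 1) (hq : 1 ≤ q)
    (he : e ∈ A) (hxy : ends e = (x, y) ∨ ends e = (y, x)) (ha : a ∈ S)
    (hreach : Reach ends (closeOn A β) a x)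
    (IH : ∀ β' (f g : (E → Bool) → ℝ),
      ClusterMonotoneOn ends S T (Slice ends S T (A.erase e) β') f →
      ClusterMonotoneOn ends S T (Slice ends S T (A.erase e) β') g →
      PosCorrelated (rcWeight ends p q) (Slice ends S T (A.erase e) β') f g)
    {f g : (E → Bool) → ℝ} (hf : ClusterMonotoneOn ends S T (Slice ends S T A β) f)
    (hg : ClusterMonotoneOn ends S T (Slice ends S T A β) g) :
    PosCorrelated (rcWeight ends p q) (Slice ends S T A β) f g := by
  have hq₀ : 0 < q := zero_lt_one.trans_le hq
  have hsub : ∀ b, Slice ends S T (A.erase e) (Function.update β e b) ⊆ Slice ends S T A β :=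
    fun b ω hω => ((mem_slice_erase_update_iff he).1 hω).2
  have hr := openingRatio_clusterMonotoneOn hp hq he hxy ha hreach (T := T)
  rw [slice_eq_union he]
  refine PosCorrelated.union (fun ω => (rcWeight_pos hp hq₀ ω).le) disjoint_slice_update
    (IH _ f g (hf.mono (hsub true)) (hg.mono (hsub true)))
    (IH _ f g (hf.mono (hsub false)) (hg.mono (hsub false))) ?_ ?_
  · exact weightedSum_slice_mul_le hp hq₀ he hxy ha hreach hf (IH _ f _ (hf.mono (hsub false)) hr)
  · exact weightedSum_slice_mul_le hp hq₀ he hxy ha hreach hg (IH _ g _ (hg.mono (hsub false)) hr)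

theorem posCorrelated_slice [Finite V] (hp : ∀ e, 0 < p e ∧ p e < 1) (hq : 1 ≤ q)
    (A : Finset E) :
    ∀ (S T : Set V) (β : E → Bool) (f g : (E → Bool) → ℝ),
      ClusterMonotoneOn ends S T (Slice ends S T A β) f →
      ClusterMonotoneOn ends S T (Slice ends S T A β) g →
      PosCorrelated (rcWeight ends p q) (Slice ends S T A β) f g := by
  induction A using Finset.strongInduction with
  | _ A IH =>
  intro S T β f g hf hg
  by_cases hS : TouchesFreeEdge ends S A β
  · obtain ⟨e, he, x, y, hxy, a, ha, hreach⟩ := hS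
    exact posCorrelated_slice_of_touches hp hq he hxy ha hreach
      (IH _ (Finset.erase_ssubset he) S T) hf hg
  by_cases hT : TouchesFreeEdge ends T A β
  · obtain ⟨e, he, x, y, hxy, a, ha, hreach⟩ := hT
    rw [slice_comm] at hf hg ⊢
    simpa only [neg_neg] using (posCorrelated_slice_of_touches hp hq he hxy ha hreach
      (IH _ (Finset.erase_ssubset he) T S) hf.neg_swap hg.neg_swap).neg
  exact posCorrelated_of_const (fun ω hω ω' hω' => hf.eq_of_not_touchesFreeEdge hS hT hω hω')
    (fun ω hω ω' hω' => hg.eq_of_not_touchesFreeEdge hS hT hω hω')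

end Induction

theorem stmt8_general [Fintype V] [Fintype E] [DecidableEq E]
    (ends : E → V × V) (p : E → ℝ) (hp : ∀ e, 0 < p e ∧ p e < 1)
    (q : ℝ) (hq : 1 ≤ q)
    (S T : Set V)
    (hpos : 0 < rcPr ends p q (NoConn ends S T))
    (f g : (E → Bool) → ℝ)
    (hf : ∀ ω ω', ClusterOf ends S ω ⊆ ClusterOf ends S ω' →
      ClusterOf ends T ω' ⊆ ClusterOf ends T ω → f ω ≤ f ω')
    (hg : ∀ ω ω', ClusterOf ends S ω ⊆ ClusterOf ends S ω' →
      ClusterOf ends T ω' ⊆ ClusterOf ends T ω → g ω ≤ g ω') :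
    rcCondExp ends p q (fun ω => f ω * g ω) (NoConn ends S T) ≥
      rcCondExp ends p q f (NoConn ends S T) *
        rcCondExp ends p q g (NoConn ends S T) := by
  have hcorr : PosCorrelated (rcWeight ends p q) (NoConn ends S T) f g := by
    rw [← slice_univ (β := fun _ => false)]
    exact posCorrelated_slice hp hq _ S T _ f g (fun ω _ ω' _ => hf ω ω')
      (fun ω _ ω' _ => hg ω ω')
  have hZ : 0 < weightedSum (rcWeight ends p q) (NoConn ends S T) 1 := by
    have hw := rcWeight_pos (ends := ends) hp (zero_lt_one.trans_le hq)
    rw [rcPr, div_pos_iff_of_pos_right (Finset.sum_pos (fun ω _ => hw ω) Finset.univ_nonempty)]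
      at hpos
    simpa [weightedSum] using hpos
  simpa [rcCondExp, weightedSum] using hcorr.div_mul_div_le hZ

/-- Theorem 2.1. Let `q ≥ 1`, let `S` and `T` be disjoint
sets of vertices with `φ_{G,q}(S ↛ T) > 0`, and let `f`, `g` be bounded
functions of the pair `(C_S, C_T)`, each increasing in `C_S` and decreasing in
`C_T`.  Then, conditioned on `{S ↛ T}`, `E[f·g] ≥ E[f] · E[g]`. -/
theorem stmt8 [Fintype V] [Fintype E] [DecidableEq E]
    (ends : E → V × V) (p : E → ℝ) (hp : ∀ e, 0 < p e ∧ p e < 1)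
    (q : ℝ) (hq : 1 ≤ q)
    (S T : Set V) (hST : Disjoint S T)
    (hpos : 0 < rcPr ends p q (NoConn ends S T))
    (f g : (E → Bool) → ℝ)
    (hfb : ∃ M, ∀ ω, |f ω| ≤ M) (hgb : ∃ M, ∀ ω, |g ω| ≤ M)
    (hf : ∀ ω ω', ClusterOf ends S ω ⊆ ClusterOf ends S ω' →
      ClusterOf ends T ω' ⊆ ClusterOf ends T ω → f ω ≤ f ω')
    (hg : ∀ ω ω', ClusterOf ends S ω ⊆ ClusterOf ends S ω' →
      ClusterOf ends T ω' ⊆ ClusterOf ends T ω → g ω ≤ g ω') :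
    rcCondExp ends p q (fun ω => f ω * g ω) (NoConn ends S T) ≥
      rcCondExp ends p q f (NoConn ends S T) *
        rcCondExp ends p q g (NoConn ends S T) :=
  stmt8_general ends p hp q hq S T hpos f g hf hg

end RandomCluster
end

section
/- Suppose W_1,…,W_a and Z_1,…,Z_b are {0,1}-valued random variables whose joint distribution ψ satisfies: (i) W_1,…,W_a are positively associated; (ii) Z_1,…,Z_b are conditionally positively associated given (W_1,…,W_a); (iii) for W, W' ∈ {0,1}^a with W' ≥ W (coordinatewise) and both of positive probability, the conditional distribution ψ(·|W') of (Z_1,…,Z_b) given (W_1,…,W_a)=W' stochastically dominates ψ(·|W). Then the full collection W_1,…,W_a, Z_1,…,Z_b is positively associated. -/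
/-!
A lemma on positive association (Lemma 2.5 of van den Berg–Häggström–Kahn).
`ψ` is a joint distribution of `{0,1}`-valued random variables
`W_1, …, W_a, Z_1, …, Z_b`, modelled as a probability mass function on
`(Fin a → Bool) × (Fin b → Bool)` (with `Bool` ordered by `false < true` and
tuples ordered coordinatewise).  A collection is positively associated if
`E[f·g] ≥ E[f]·E[g]` for all pairs of increasing functions `f, g` of the
collection.
-/

namespace AssocLemma

variable {a b : ℕ}

/-- The marginal distribution of `(W_1, …, W_a)`. -/
noncomputable def margW (ψ : (Fin a → Bool) × (Fin b → Bool) → ℝ)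
    (w : Fin a → Bool) : ℝ :=
  ∑ z : Fin b → Bool, ψ (w, z)

/-- The conditional expectation of `f(Z_1, …, Z_b)` given `(W_1, …, W_a) = w`. -/
noncomputable def condExpZ (ψ : (Fin a → Bool) × (Fin b → Bool) → ℝ)
    (w : Fin a → Bool) (f : (Fin b → Bool) → ℝ) : ℝ :=
  (∑ z : Fin b → Bool, ψ (w, z) * f z) / margW ψ w

/-!
Write `F(w) = E[f(w, Z) | W = w]` and `G(w) = E[g(w, Z) | W = w]`. Conditioning on `W` and using
(ii) gives `E[fg] ≥ E[F(W) G(W)]`. Since `f` is increasing and the conditional laws increase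
stochastically in `w` (iii), `F` and `G` are increasing on the support of `W`; extended to
increasing functions on all of `{0,1}^a`, (i) yields `E[F(W) G(W)] ≥ E[F(W)] E[G(W)] = E[f] E[g]`.
-/

theorem _root_.MonotoneOn.exists_monotone_extension_of_finite {α β : Type*} [Preorder α] [LinearOrder β]
    [Nonempty β] {f : α → β} {s : Set α} (hf : MonotoneOn f s) (hs : s.Finite) :
    ∃ g : α → β, Monotone g ∧ Set.EqOn f g s := by
  classical
  obtain ⟨b⟩ := ‹Nonempty β›
  -- `c` lies below every value of `f` on `s`; it is the value of `g` below all of `s`.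
  set c := (insert b (hs.toFinset.image f)).min' (Finset.insert_nonempty _ _)
  refine ⟨fun x => (insert c ((hs.toFinset.filter (· ≤ x)).image f)).max'
    (Finset.insert_nonempty _ _), fun x y hxy => ?_, fun x hx => ?_⟩
  · refine Finset.max'_subset _ (Finset.insert_subset_insert _ (Finset.image_subset_image ?_))
    intro v hv
    rw [Finset.mem_filter] at hv ⊢
    exact ⟨hv.1, hv.2.trans hxy⟩
  · refine le_antisymm (Finset.le_max' _ _ ?_) (Finset.max'_le _ _ _ ?_)
    · exact Finset.mem_insert_of_mem (Finset.mem_image_of_mem _ (by simpa using hx))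
    · intro y hy
      rcases Finset.mem_insert.1 hy with rfl | hy
      · exact Finset.min'_le _ _
          (Finset.mem_insert_of_mem (Finset.mem_image_of_mem _ (by simpa using hx)))
      · obtain ⟨v, hv, rfl⟩ := Finset.mem_image.1 hy
        rw [Finset.mem_filter, Set.Finite.mem_toFinset] at hv
        exact hf hv.1 hx hv.2

section

variable (ψ : (Fin a → Bool) × (Fin b → Bool) → ℝ)

theorem margW_nonneg (hψ0 : ∀ x, 0 ≤ ψ x) (w : Fin a → Bool) : 0 ≤ margW ψ w :=
  Finset.sum_nonneg fun _ _ => hψ0 _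

theorem sum_mul_eq_sum_margW_mul_condExpZ (hψ0 : ∀ x, 0 ≤ ψ x)
    (h : (Fin a → Bool) × (Fin b → Bool) → ℝ) :
    ∑ x, ψ x * h x = ∑ w, margW ψ w * condExpZ ψ w (fun z => h (w, z)) := by
  rw [Fintype.sum_prod_type]
  refine Finset.sum_congr rfl fun w _ => ?_
  rcases (margW_nonneg ψ hψ0 w).lt_or_eq with hw | hw
  · rw [condExpZ, mul_div_cancel₀ _ hw.ne']
  · have hψw : ∀ z, ψ (w, z) = 0 := fun z =>
      (Finset.sum_eq_zero_iff_of_nonneg fun z _ => hψ0 (w, z)).1 hw.symm z (Finset.mem_univ z)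
    simp [hψw, ← hw]

theorem sum_margW_mul_le_sum_margW_mul (hψ0 : ∀ x, 0 ≤ ψ x) {H H' : (Fin a → Bool) → ℝ}
    (hHH' : ∀ w, 0 < margW ψ w → H w ≤ H' w) :
    ∑ w, margW ψ w * H w ≤ ∑ w, margW ψ w * H' w := by
  refine Finset.sum_le_sum fun w _ => ?_
  rcases (margW_nonneg ψ hψ0 w).lt_or_eq with hw | hw
  · exact mul_le_mul_of_nonneg_left (hHH' w hw) hw.le
  · simp [← hw]

theorem sum_margW_mul_congr (hψ0 : ∀ x, 0 ≤ ψ x) {H H' : (Fin a → Bool) → ℝ}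
    (hHH' : Set.EqOn H H' {w | 0 < margW ψ w}) :
    ∑ w, margW ψ w * H w = ∑ w, margW ψ w * H' w :=
  le_antisymm (sum_margW_mul_le_sum_margW_mul ψ hψ0 fun _ hw => (hHH' hw).le)
    (sum_margW_mul_le_sum_margW_mul ψ hψ0 fun _ hw => (hHH' hw).ge)

theorem condExpZ_mono (hψ0 : ∀ x, 0 ≤ ψ x) {w : Fin a → Bool} (hw : 0 < margW ψ w)
    {p q : (Fin b → Bool) → ℝ} (hpq : p ≤ q) : condExpZ ψ w p ≤ condExpZ ψ w q :=
  div_le_div_of_nonneg_right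
    (Finset.sum_le_sum fun z _ => mul_le_mul_of_nonneg_left (hpq z) (hψ0 _)) hw.le

theorem monotoneOn_condExpZ_section (hψ0 : ∀ x, 0 ≤ ψ x)
    (hiii : ∀ w w' : Fin a → Bool, w ≤ w' → 0 < margW ψ w → 0 < margW ψ w' →
      ∀ f : (Fin b → Bool) → ℝ, Monotone f → condExpZ ψ w f ≤ condExpZ ψ w' f)
    {f : (Fin a → Bool) × (Fin b → Bool) → ℝ} (hf : Monotone f) :
    MonotoneOn (fun w => condExpZ ψ w (fun z => f (w, z))) {w | 0 < margW ψ w} := by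
  intro w hw w' hw' hww'
  calc condExpZ ψ w (fun z => f (w, z))
      ≤ condExpZ ψ w (fun z => f (w', z)) := condExpZ_mono ψ hψ0 hw fun _ => hf ⟨hww', le_rfl⟩
    _ ≤ condExpZ ψ w' (fun z => f (w', z)) := hiii w w' hww' hw hw' _ fun _ _ hz => hf ⟨le_rfl, hz⟩

end

theorem stmt12_general (ψ : (Fin a → Bool) × (Fin b → Bool) → ℝ)
    (hψ0 : ∀ x, 0 ≤ ψ x)
    -- (i) the `W`'s are positively associated
    (hi : ∀ f g : (Fin a → Bool) → ℝ, Monotone f → Monotone g →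
      ∑ w : Fin a → Bool, margW ψ w * (f w * g w) ≥
        (∑ w : Fin a → Bool, margW ψ w * f w) *
          (∑ w : Fin a → Bool, margW ψ w * g w))
    -- (ii) the `Z`'s are conditionally positively associated given the `W`'s
    (hii : ∀ w : Fin a → Bool, 0 < margW ψ w →
      ∀ f g : (Fin b → Bool) → ℝ, Monotone f → Monotone g →
        condExpZ ψ w (fun z => f z * g z) ≥ condExpZ ψ w f * condExpZ ψ w g)
    -- (iii) stochastic domination of the conditional distributions
    (hiii : ∀ w w' : Fin a → Bool, w ≤ w' → 0 < margW ψ w → 0 < margW ψ w' →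
      ∀ f : (Fin b → Bool) → ℝ, Monotone f →
        condExpZ ψ w f ≤ condExpZ ψ w' f) :
    -- conclusion: the whole collection is positively associated
    ∀ f g : (Fin a → Bool) × (Fin b → Bool) → ℝ, Monotone f → Monotone g →
      ∑ x : (Fin a → Bool) × (Fin b → Bool), ψ x * (f x * g x) ≥
        (∑ x : (Fin a → Bool) × (Fin b → Bool), ψ x * f x) *
          (∑ x : (Fin a → Bool) × (Fin b → Bool), ψ x * g x) := by
  intro f g hf hg
  obtain ⟨F, hF, hFeq⟩ :=
    (monotoneOn_condExpZ_section ψ hψ0 hiii hf).exists_monotone_extension_of_finite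
      (Set.toFinite _)
  obtain ⟨G, hG, hGeq⟩ :=
    (monotoneOn_condExpZ_section ψ hψ0 hiii hg).exists_monotone_extension_of_finite
      (Set.toFinite _)
  calc (∑ x, ψ x * f x) * (∑ x, ψ x * g x)
      = (∑ w, margW ψ w * F w) * (∑ w, margW ψ w * G w) := by
        rw [sum_mul_eq_sum_margW_mul_condExpZ ψ hψ0 f, sum_mul_eq_sum_margW_mul_condExpZ ψ hψ0 g,
          sum_margW_mul_congr ψ hψ0 hFeq, sum_margW_mul_congr ψ hψ0 hGeq]
    _ ≤ ∑ w, margW ψ w * (F w * G w) := hi F G hF hG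
    _ ≤ ∑ w, margW ψ w * condExpZ ψ w (fun z => f (w, z) * g (w, z)) :=
        sum_margW_mul_le_sum_margW_mul ψ hψ0 fun w hw => by
          rw [← hFeq hw, ← hGeq hw]
          exact hii w hw _ _ (fun _ _ hz => hf ⟨le_rfl, hz⟩) (fun _ _ hz => hg ⟨le_rfl, hz⟩)
    _ = ∑ x, ψ x * (f x * g x) := (sum_mul_eq_sum_margW_mul_condExpZ ψ hψ0 (f * g)).symm

/-- Lemma 2.5.  Suppose the joint distribution `ψ` of
`W_1, …, W_a, Z_1, …, Z_b` satisfies: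
(i) `W_1, …, W_a` are positively associated;
(ii) `Z_1, …, Z_b` are conditionally positively associated given
`(W_1, …, W_a)`;
(iii) for `W ≤ W'` of positive probability, the conditional distribution of
`(Z_1, …, Z_b)` given `W'` stochastically dominates the one given `W`.
Then the full collection `W_1, …, W_a, Z_1, …, Z_b` is positively associated. -/
theorem stmt12 (ψ : (Fin a → Bool) × (Fin b → Bool) → ℝ)
    (hψ0 : ∀ x, 0 ≤ ψ x)
    (hψ1 : ∑ x : (Fin a → Bool) × (Fin b → Bool), ψ x = 1)
    -- (i) the `W`'s are positively associated
    (hi : ∀ f g : (Fin a → Bool) → ℝ, Monotone f → Monotone g →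
      ∑ w : Fin a → Bool, margW ψ w * (f w * g w) ≥
        (∑ w : Fin a → Bool, margW ψ w * f w) *
          (∑ w : Fin a → Bool, margW ψ w * g w))
    -- (ii) the `Z`'s are conditionally positively associated given the `W`'s
    (hii : ∀ w : Fin a → Bool, 0 < margW ψ w →
      ∀ f g : (Fin b → Bool) → ℝ, Monotone f → Monotone g →
        condExpZ ψ w (fun z => f z * g z) ≥ condExpZ ψ w f * condExpZ ψ w g)
    -- (iii) stochastic domination of the conditional distributions
    (hiii : ∀ w w' : Fin a → Bool, w ≤ w' → 0 < margW ψ w → 0 < margW ψ w' →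
      ∀ f : (Fin b → Bool) → ℝ, Monotone f →
        condExpZ ψ w f ≤ condExpZ ψ w' f) :
    -- conclusion: the whole collection is positively associated
    ∀ f g : (Fin a → Bool) × (Fin b → Bool) → ℝ, Monotone f → Monotone g →
      ∑ x : (Fin a → Bool) × (Fin b → Bool), ψ x * (f x * g x) ≥
        (∑ x : (Fin a → Bool) × (Fin b → Bool), ψ x * f x) *
          (∑ x : (Fin a → Bool) × (Fin b → Bool), ψ x * g x) :=
  stmt12_general ψ hψ0 hi hii hiii

end AssocLemma
end

section
/- Let s be a vertex of G, let X ⊆ V \ {s} with Pr(R_X) > 0, and let f and g be bounded increasing functions of C_s. Then E[f·g | R_X] ≥ E[f | R_X] · E[g | R_X]; equivalently, conditioned on {s↛x for all x ∈ X}, the random variables 1_{{s→y}}, y ∈ V, are positively associated. -/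
/-!
Percolation on a finite graph `G = (V, E)` in which each edge is either
oriented or unoriented.  An edge `e` has endpoints `ends e : V × V`; if
`oriented e = true` it may be traversed only from `(ends e).1` to `(ends e).2`,
while if `oriented e = false` it may be traversed in either direction.  Each
edge is independently open (`ω e = true`) with probability `p e`; `Pr` is the
resulting product measure on configurations `ω : E → Bool`.
-/

attribute [local instance] Classical.propDecidable

namespace MixedPerc

variable {V E : Type*}

/-- One step along an open edge, respecting orientations. -/
def Step (ends : E → V × V) (oriented : E → Bool) (ω : E → Bool) (u v : V) : Prop :=
  ∃ e, ω e = true ∧ (ends e = (u, v) ∨ (oriented e = false ∧ ends e = (v, u)))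

/-- `Reach ends oriented ω u v` : there is an open path from `u` to `v`
respecting the orientations of the oriented edges. -/
def Reach (ends : E → V × V) (oriented : E → Bool) (ω : E → Bool) (u v : V) : Prop :=
  Relation.ReflTransGen (Step ends oriented ω) u v

/-- The open cluster `C_s(ω)` of `s`: the set of edges lying on some open path
(respecting orientations) starting at `s`. -/
def Cluster (ends : E → V × V) (oriented : E → Bool) (s : V) (ω : E → Bool) : Set E :=
  {e | ω e = true ∧ (Reach ends oriented ω s (ends e).1 ∨
        (oriented e = false ∧ Reach ends oriented ω s (ends e).2))}

/-- `R_X`: the event that there is no open path (respecting orientations) from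
`s` to any vertex of `X`. -/
def RX (ends : E → V × V) (oriented : E → Bool) (s : V) (X : Set V) :
    Set (E → Bool) :=
  {ω | ∀ x ∈ X, ¬ Reach ends oriented ω s x}

/-- The probability of a single configuration under the product measure. -/
noncomputable def weight [Fintype E] (p : E → ℝ) (ω : E → Bool) : ℝ :=
  ∏ e, if ω e then p e else 1 - p e

/-- The probability of an event `A ⊆ {0,1}^E`. -/
noncomputable def Pr [Fintype E] [DecidableEq E] (p : E → ℝ) (A : Set (E → Bool)) : ℝ :=
  ∑ ω : E → Bool, A.indicator (weight p) ω

/-- Conditional expectation `E[f | B]`. -/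
noncomputable def condExp [Fintype E] [DecidableEq E] (p : E → ℝ)
    (f : (E → Bool) → ℝ) (B : Set (E → Bool)) : ℝ :=
  (∑ ω : E → Bool, B.indicator (fun ω' => weight p ω' * f ω') ω) / Pr p B

/-!
Induction on the number of edges with `0 < p e < 1`.  If such an edge `e` can be entered from
the edges of probability one, condition on its state.  Both conditioned measures satisfy the
inequality by induction, and it survives the mixture because `E[f | R_X]` increases when `e` is
opened.  For that, work with `e` closed: given the cluster `C` of `s`, the edges off `C ∪ ∂C`
are still independent, so the conditional probability that `R_X` survives opening `e` is a
function of `C`.  It increases with `C`, since a larger cluster avoiding `X` leaves fewer free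
edges through which the opened edge could reach `X`; the induction hypothesis applied to `f`
and this function gives the monotonicity.  If no such edge exists, the cluster is almost surely
deterministic and the inequality is an equality.
-/

section Reachability

variable {ends : E → V × V} {oriented : E → Bool} {s : V}

def Joins (ends : E → V × V) (oriented : E → Bool) (e : E) (u v : V) : Prop :=
  ends e = (u, v) ∨ (oriented e = false ∧ ends e = (v, u))

def Entered (ends : E → V × V) (oriented : E → Bool) (s : V) (ω : E → Bool) (e : E) : Prop :=
  Reach ends oriented ω s (ends e).1 ∨
    (oriented e = false ∧ Reach ends oriented ω s (ends e).2)

noncomputable def openOn (C : Set E) : E → Bool := fun e => decide (e ∈ C)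

def boundary (ends : E → V × V) (oriented : E → Bool) (s : V) (C : Set E) : Set E :=
  {e | e ∉ C ∧ Entered ends oriented s (openOn C) e}

@[simp] lemma openOn_eq_true {C : Set E} {e : E} : openOn C e = true ↔ e ∈ C := by
  simp [openOn]

lemma openOn_le_iff {C : Set E} {ω : E → Bool} : openOn C ≤ ω ↔ ∀ e ∈ C, ω e = true := by
  simp [Pi.le_def, Bool.le_iff_imp]

lemma openOn_mono {C C' : Set E} (h : C ⊆ C') : openOn C ≤ openOn C' :=
  openOn_le_iff.2 fun _ he => openOn_eq_true.2 (h he)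

lemma eq_true_of_le {ω ω' : E → Bool} (h : ω ≤ ω') {e : E} (he : ω e = true) : ω' e = true :=
  Bool.le_iff_imp.1 (h e) he

lemma entered_of_joins {ω : E → Bool} {e : E} {u v : V} (hu : Reach ends oriented ω s u)
    (h : Joins ends oriented e u v) : Entered ends oriented s ω e := by
  rcases h with h | ⟨ho, h⟩
  · exact Or.inl (by rwa [h])
  · exact Or.inr ⟨ho, by rwa [h]⟩

lemma reach_of_mem_cluster {ω : E → Bool} {e : E} {u v : V}
    (he : e ∈ Cluster ends oriented s ω) (h : Joins ends oriented e u v) :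
    Reach ends oriented ω s v := by
  obtain ⟨hopen, hent⟩ := he
  have hends : Reach ends oriented ω s (ends e).1 ∧ Reach ends oriented ω s (ends e).2 := by
    rcases hent with h₁ | ⟨ho, h₂⟩
    · exact ⟨h₁, h₁.tail ⟨e, hopen, Or.inl rfl⟩⟩
    · exact ⟨h₂.tail ⟨e, hopen, Or.inr ⟨ho, rfl⟩⟩, h₂⟩
  rcases h with h | ⟨-, h⟩ <;> simp only [h] at hends
  exacts [hends.2, hends.1]

lemma Reach.mono {ω ω' : E → Bool} (h : ω ≤ ω') {u v : V}
    (hr : Reach ends oriented ω u v) : Reach ends oriented ω' u v :=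
  Relation.ReflTransGen.mono (fun _ _ ⟨e, he, hj⟩ => ⟨e, eq_true_of_le h he, hj⟩) _ _ hr

lemma Entered.mono {ω ω' : E → Bool} (h : ω ≤ ω') {e : E}
    (he : Entered ends oriented s ω e) : Entered ends oriented s ω' e :=
  he.imp (Reach.mono h) (And.imp_right (Reach.mono h))

lemma cluster_mono : Monotone (Cluster ends oriented s) :=
  fun _ _ h _ he => ⟨eq_true_of_le h he.1, Entered.mono h he.2⟩

lemma Reach.of_entered {ω ω' : E → Bool}
    (h : ∀ e, ω e = true → Entered ends oriented s ω' e → ω' e = true) {v : V}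
    (hv : Reach ends oriented ω s v) : Reach ends oriented ω' s v := by
  induction hv with
  | refl => exact .refl
  | tail _ hstep ih =>
    obtain ⟨e, he, hj⟩ := hstep
    exact ih.tail ⟨e, h e he (entered_of_joins ih hj), hj⟩

lemma cluster_eq_of_entered {ω ω' : E → Bool} (hle : ω' ≤ ω)
    (h : ∀ e, ω e = true → Entered ends oriented s ω' e → ω' e = true) :
    Cluster ends oriented s ω = Cluster ends oriented s ω' := by
  refine le_antisymm (fun e ⟨he, hent⟩ => ?_) (cluster_mono hle)
  have hent' : Entered ends oriented s ω' e :=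
    hent.imp (Reach.of_entered h) (And.imp_right (Reach.of_entered h))
  exact ⟨h e he hent', hent'⟩

lemma openOn_cluster_le (ω : E → Bool) : openOn (Cluster ends oriented s ω) ≤ ω :=
  openOn_le_iff.2 fun _ he => he.1

lemma mem_cluster_of_entered_openOn {ω : E → Bool} {e : E} (hopen : ω e = true)
    (he : Entered ends oriented s (openOn (Cluster ends oriented s ω)) e) :
    e ∈ Cluster ends oriented s ω :=
  ⟨hopen, he.mono (openOn_cluster_le ω)⟩

lemma cluster_openOn_cluster (ω : E → Bool) :
    Cluster ends oriented s (openOn (Cluster ends oriented s ω)) = Cluster ends oriented s ω :=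
  (cluster_eq_of_entered (openOn_cluster_le ω) fun _ he hent =>
    openOn_eq_true.2 (mem_cluster_of_entered_openOn he hent)).symm

lemma reach_openOn_cluster_iff {ω : E → Bool} {v : V} :
    Reach ends oriented (openOn (Cluster ends oriented s ω)) s v ↔ Reach ends oriented ω s v :=
  ⟨Reach.mono (openOn_cluster_le ω), Reach.of_entered fun _ he hent =>
    openOn_eq_true.2 (mem_cluster_of_entered_openOn he hent)⟩

lemma cluster_openOn_cluster_sup {ω ω' : E → Bool} (h : ω' ≤ ω) :
    Cluster ends oriented s (openOn (Cluster ends oriented s ω) ⊔ ω') =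
      Cluster ends oriented s ω :=
  le_antisymm (cluster_mono (sup_le (openOn_cluster_le ω) h))
    ((cluster_openOn_cluster ω).symm.le.trans (cluster_mono le_sup_left))

lemma mem_boundary_cluster {ω : E → Bool} {e : E} :
    e ∈ boundary ends oriented s (Cluster ends oriented s ω) ↔
      ω e = false ∧ Entered ends oriented s ω e := by
  have hent : Entered ends oriented s (openOn (Cluster ends oriented s ω)) e ↔
      Entered ends oriented s ω e := by
    simp only [Entered, reach_openOn_cluster_iff]
  change ¬(ω e = true ∧ _) ∧ _ ↔ _
  rw [hent]
  exact ⟨fun ⟨hn, h⟩ => ⟨Bool.eq_false_iff.2 fun ht => hn ⟨ht, h⟩, h⟩,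
    fun ⟨hf, h⟩ => ⟨fun hc => absurd hc.1 (by simp [hf]), h⟩⟩

lemma boundary_subset_union {B B' : Set E} (h : B ⊆ B') :
    boundary ends oriented s B ⊆ B' ∪ boundary ends oriented s B' := by
  intro e ⟨heB, hent⟩
  by_cases heB' : e ∈ B'
  · exact Or.inl heB'
  · exact Or.inr ⟨heB', hent.mono (openOn_mono h)⟩

lemma cluster_eq_iff {C : Set E} (hC : Cluster ends oriented s (openOn C) = C) (ω : E → Bool) :
    Cluster ends oriented s ω = C ↔
      openOn C ≤ ω ∧ ∀ e ∈ boundary ends oriented s C, ω e = false := by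
  constructor
  · rintro rfl
    refine ⟨openOn_cluster_le ω, fun e he => (mem_boundary_cluster.1 he).1⟩
  · rintro ⟨hle, hbd⟩
    rw [← hC]
    refine cluster_eq_of_entered hle fun e he hent => ?_
    by_contra heC
    have : e ∈ boundary ends oriented s C := ⟨fun h => heC (openOn_eq_true.2 h), hent⟩
    simp [hbd e this] at he

lemma dependsOn_cluster_eq (C : Set E) :
    DependsOn (fun ω => Cluster ends oriented s ω = C) (C ∪ boundary ends oriented s C) := by
  intro ω ω' hagree
  apply propext
  by_cases hC : ∃ ω₀, Cluster ends oriented s ω₀ = C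
  · obtain ⟨ω₀, rfl⟩ := hC
    have hfeas := cluster_openOn_cluster (ends := ends) (oriented := oriented) (s := s) ω₀
    simp only [cluster_eq_iff hfeas, openOn_le_iff]
    constructor <;> rintro ⟨h₁, h₂⟩
    · exact ⟨fun e he => hagree e (Or.inl he) ▸ h₁ e he,
        fun e he => hagree e (Or.inr he) ▸ h₂ e he⟩
    · exact ⟨fun e he => (hagree e (Or.inl he)).symm ▸ h₁ e he,
        fun e he => (hagree e (Or.inr he)).symm ▸ h₂ e he⟩
  · simp only [not_exists] at hC
    simp [hC]

lemma RX_antitone {X : Set V} {ω ω' : E → Bool} (h : ω ≤ ω')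
    (h' : ω' ∈ RX ends oriented s X) : ω ∈ RX ends oriented s X :=
  fun x hx hr => h' x hx (hr.mono h)

lemma mem_RX_iff_openOn_cluster {X : Set V} {ω : E → Bool} :
    ω ∈ RX ends oriented s X ↔ openOn (Cluster ends oriented s ω) ∈ RX ends oriented s X := by
  simp only [RX, Set.mem_ofPred_eq, reach_openOn_cluster_iff]

def IncreasingInCluster (ends : E → V × V) (oriented : E → Bool) (s : V)
    (f : (E → Bool) → ℝ) : Prop :=
  ∀ ω ω', Cluster ends oriented s ω ⊆ Cluster ends oriented s ω' → f ω ≤ f ω'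

lemma IncreasingInCluster.factorsThrough {f : (E → Bool) → ℝ}
    (hf : IncreasingInCluster ends oriented s f) :
    Function.FactorsThrough f (Cluster ends oriented s) :=
  fun ω ω' h => le_antisymm (hf ω ω' h.le) (hf ω' ω h.ge)

lemma factorsThrough_indicator_RX {X : Set V} {φ : (E → Bool) → ℝ}
    (hφ : Function.FactorsThrough φ (Cluster ends oriented s)) :
    Function.FactorsThrough ((RX ends oriented s X).indicator φ) (Cluster ends oriented s) :=
  fun ω ω' h => by simp only [Set.indicator_apply, mem_RX_iff_openOn_cluster (ω := ω),
    mem_RX_iff_openOn_cluster (ω := ω'), h, hφ h]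

end Reachability

section ProductMeasure

lemma update_bounds [DecidableEq E] {p : E → ℝ} (hp : ∀ e, 0 ≤ p e ∧ p e ≤ 1) (e : E) {q : ℝ}
    (hq : 0 ≤ q ∧ q ≤ 1) :
    ∀ e', 0 ≤ Function.update p e q e' ∧ Function.update p e q e' ≤ 1 := by
  intro e'
  by_cases h : e' = e
  · subst h; simpa using hq
  · simpa [h] using hp e'

variable [Fintype E] {p : E → ℝ}

lemma weight_nonneg (hp : ∀ e, 0 ≤ p e ∧ p e ≤ 1) (ω : E → Bool) : 0 ≤ weight p ω :=
  Finset.prod_nonneg fun e _ => by split <;> linarith [hp e]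

lemma eq_true_of_weight_ne_zero {ω : E → Bool} (hw : weight p ω ≠ 0) {e : E} (he : p e = 1) :
    ω e = true := by
  by_contra h
  exact hw (Finset.prod_eq_zero (Finset.mem_univ e) (by simp [h, he]))

lemma eq_false_of_weight_ne_zero {ω : E → Bool} (hw : weight p ω ≠ 0) {e : E} (he : p e = 0) :
    ω e = false := by
  by_contra h
  exact hw (Finset.prod_eq_zero (Finset.mem_univ e) (by simp [h, he]))

variable [DecidableEq E]

lemma weight_update (p : E → ℝ) (ω : E → Bool) (e : E) (a : ℝ) :
    weight (Function.update p e a) ω =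
      (if ω e then a else 1 - a) * ∏ e' ∈ Finset.univ.erase e, if ω e' then p e' else 1 - p e' := by
  rw [weight, ← Finset.mul_prod_erase _ _ (Finset.mem_univ e)]
  simp only [Function.update_self]
  congr 1
  refine Finset.prod_congr rfl fun e' he' => ?_
  simp [Function.update_of_ne (Finset.ne_of_mem_erase he')]

lemma weight_eq_add_update (p : E → ℝ) (ω : E → Bool) (e : E) :
    weight p ω = p e * weight (Function.update p e 1) ω +
      (1 - p e) * weight (Function.update p e 0) ω := by
  conv_lhs => rw [← Function.update_eq_self e p]
  rw [weight_update, weight_update, weight_update]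
  cases ω e <;> simp

noncomputable def expect (p : E → ℝ) (F : (E → Bool) → ℝ) : ℝ :=
  ∑ ω, weight p ω * F ω

lemma sum_weight (p : E → ℝ) : ∑ ω, weight p ω = 1 :=
  calc ∑ ω, weight p ω = ∏ e, ∑ b : Bool, if b then p e else 1 - p e :=
        (Fintype.prod_sum fun e (b : Bool) => if b then p e else 1 - p e).symm
    _ = 1 := by simp

lemma expect_const (p : E → ℝ) (c : ℝ) : expect p (fun _ => c) = c := by
  rw [expect, ← Finset.sum_mul, sum_weight, one_mul]

lemma expect_mono (hp : ∀ e, 0 ≤ p e ∧ p e ≤ 1) {F G : (E → Bool) → ℝ} (h : F ≤ G) :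
    expect p F ≤ expect p G :=
  Finset.sum_le_sum fun ω _ => mul_le_mul_of_nonneg_left (h ω) (weight_nonneg hp ω)

lemma expect_nonneg (hp : ∀ e, 0 ≤ p e ∧ p e ≤ 1) {F : (E → Bool) → ℝ} (h : 0 ≤ F) :
    0 ≤ expect p F :=
  (expect_const p 0).symm.le.trans (expect_mono hp h)

lemma expect_congr_of_weight_ne_zero {F G : (E → Bool) → ℝ}
    (h : ∀ ω, weight p ω ≠ 0 → F ω = G ω) : expect p F = expect p G :=
  Finset.sum_congr rfl fun ω _ => by
    by_cases hw : weight p ω = 0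
    · simp [hw]
    · rw [h ω hw]

lemma expect_eq_add_update (e : E) (F : (E → Bool) → ℝ) :
    expect p F = p e * expect (Function.update p e 1) F +
      (1 - p e) * expect (Function.update p e 0) F := by
  simp only [expect, Finset.mul_sum, ← Finset.sum_add_distrib]
  refine Finset.sum_congr rfl fun ω _ => ?_
  rw [weight_eq_add_update p ω e]
  ring

lemma expect_update_one (e : E) (F : (E → Bool) → ℝ) :
    expect (Function.update p e 1) F =
      expect (Function.update p e 0) (fun ω => F (Function.update ω e true)) := by
  have hflip : Function.Involutive fun ω : E → Bool => Function.update ω e (!ω e) := fun ω => by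
    ext e'; by_cases h : e' = e <;> simp [h]
  unfold expect
  refine Fintype.sum_bijective _ hflip.bijective _ _ fun ω => ?_
  have hrest : ∀ b, (∏ e' ∈ Finset.univ.erase e,
      if Function.update ω e b e' then p e' else 1 - p e') =
      ∏ e' ∈ Finset.univ.erase e, if ω e' then p e' else 1 - p e' := fun b =>
    Finset.prod_congr rfl fun e' he' => by simp [Function.update_of_ne (Finset.ne_of_mem_erase he')]
  rw [weight_update, weight_update, hrest]
  cases h : ω e
  · simp
  · have hω : Function.update ω e true = ω := Function.update_eq_self_iff.2 h.symm
    simp [hω]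

lemma expect_mul_of_dependsOn (S : Set E) {φ ψ : (E → Bool) → ℝ} (hφ : DependsOn φ S)
    (hψ : DependsOn ψ Sᶜ) :
    expect p (fun ω => φ ω * ψ ω) = expect p φ * expect p ψ := by
  let split := Equiv.piEquivPiSubtypeProd (· ∈ S) fun _ => Bool
  let wS : ({e // e ∈ S} → Bool) → ℝ := fun a => ∏ i, if a i then p i else 1 - p i
  let wSc : ({e // e ∉ S} → Bool) → ℝ := fun b => ∏ i, if b i then p i else 1 - p i
  have hsplit : ∀ F : (E → Bool) → ℝ,
      expect p F = ∑ a, ∑ b, wS a * wSc b * F (split.symm (a, b)) := by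
    intro F
    rw [expect, ← Equiv.sum_comp split.symm, Fintype.sum_prod_type]
    refine Finset.sum_congr rfl fun a _ => Finset.sum_congr rfl fun b _ => ?_
    rw [weight, ← Fintype.prod_subtype_mul_prod_subtype (· ∈ S)]
    congr 2 <;> refine Finset.prod_congr rfl fun i _ => ?_ <;>
      simp [split, Equiv.piEquivPiSubtypeProd_symm_apply, i.2]
  have hprod : ∀ (u : ({e // e ∈ S} → Bool) → ℝ) (v : ({e // e ∉ S} → Bool) → ℝ),
      ∑ a, ∑ b, wS a * wSc b * (u a * v b) = (∑ a, wS a * u a) * ∑ b, wSc b * v b :=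
    fun u v => by
    rw [Finset.sum_mul_sum]
    exact Finset.sum_congr rfl fun a _ => Finset.sum_congr rfl fun b _ => by ring
  set u := fun a => φ (split.symm (a, fun _ => false))
  set v := fun b => ψ (split.symm (fun _ => false, b))
  have hφ' : ∀ a b, φ (split.symm (a, b)) = u a := fun a b =>
    hφ fun i hi => by simp [split, Equiv.piEquivPiSubtypeProd_symm_apply, hi]
  have hψ' : ∀ a b, ψ (split.symm (a, b)) = v b := fun a b =>
    hψ fun i (hi : i ∉ S) => by simp [split, Equiv.piEquivPiSubtypeProd_symm_apply, hi]
  have hu := hprod u 1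
  have hv := hprod 1 v
  have hone := hprod 1 1
  simp only [Pi.one_apply, mul_one, one_mul] at hu hv hone
  have htotal := hsplit fun _ => 1
  simp only [expect_const, mul_one] at htotal
  rw [← htotal] at hone
  rw [hsplit, hsplit φ, hsplit ψ]
  simp only [hφ', hψ', hprod, hu, hv]
  linear_combination ((∑ a, wS a * u a) * ∑ b, wSc b * v b) * hone

lemma Pr_eq_expect (A : Set (E → Bool)) : Pr p A = expect p (A.indicator 1) :=
  Finset.sum_congr rfl fun ω _ => by simp [Set.indicator_apply]

lemma condExp_eq (φ : (E → Bool) → ℝ) (A : Set (E → Bool)) :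
    condExp p φ A = expect p (A.indicator φ) / Pr p A := by
  simp only [condExp, expect, Set.indicator_mul_right]

lemma Pr_mono (hp : ∀ e, 0 ≤ p e ∧ p e ≤ 1) {A B : Set (E → Bool)} (h : A ⊆ B) :
    Pr p A ≤ Pr p B := by
  rw [Pr_eq_expect, Pr_eq_expect]
  exact expect_mono hp (Set.indicator_le_indicator_of_subset h fun _ => zero_le_one)

lemma expect_indicator_eq_zero (hp : ∀ e, 0 ≤ p e ∧ p e ≤ 1) {A : Set (E → Bool)}
    (h : expect p (A.indicator 1) = 0) (φ : (E → Bool) → ℝ) : expect p (A.indicator φ) = 0 := by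
  have hterm := (Finset.sum_eq_zero_iff_of_nonneg fun ω _ =>
    mul_nonneg (weight_nonneg hp ω) (Set.indicator_nonneg (fun _ _ => zero_le_one) ω)).1 h
  refine Finset.sum_eq_zero fun ω hω => ?_
  by_cases hA : ω ∈ A
  · simpa [hA] using Or.inl (a := weight p ω = 0) (by simpa [hA] using hterm ω hω)
  · simp [hA]

end ProductMeasure

section Coupling

variable {ends : E → V × V} {oriented : E → Bool} {s : V} {p : E → ℝ} {e : E}

noncomputable def forcedOpen (p : E → ℝ) : E → Bool := fun e => decide (p e = 1)

noncomputable def glue (ends : E → V × V) (oriented : E → Bool) (s : V) (p : E → ℝ) (e : E)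
    (B : Set E) (τ : E → Bool) : E → Bool :=
  fun e' => if e' = e ∨ e' ∈ B ∨ p e' = 1 then true
    else if e' ∈ boundary ends oriented s B then false else τ e'

lemma forcedOpen_le_glue {B : Set E} {τ : E → Bool} :
    forcedOpen p ≤ glue ends oriented s p e B τ := fun e' => by
  by_cases h : p e' = 1 <;> simp [forcedOpen, glue, h]

lemma reach_glue_endpoint {B : Set E} {τ : E → Bool}
    (he : Entered ends oriented s (forcedOpen p) e) {u v : V} (hj : Joins ends oriented e u v) :
    Reach ends oriented (glue ends oriented s p e B τ) s v :=
  reach_of_mem_cluster ⟨by simp [glue], he.mono forcedOpen_le_glue⟩ hj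

/-- An edge that is neither in the cluster of `ω` nor on its boundary is not in `B ∪ ∂B` either,
so off the cluster the two glued configurations agree. -/
lemma reach_glue_step {B : Set E} {ω τ : E → Bool} (hF : forcedOpen p ≤ ω)
    (hB : B ⊆ Cluster ends oriented s ω) (he : Entered ends oriented s (forcedOpen p) e) {u v : V}
    (hu : Reach ends oriented ω s u ∨ Reach ends oriented (glue ends oriented s p e B τ) s u)
    (huv : Step ends oriented (glue ends oriented s p e (Cluster ends oriented s ω) τ) u v) :
    Reach ends oriented ω s v ∨ Reach ends oriented (glue ends oriented s p e B τ) s v := by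
  obtain ⟨e₁, hopen, hj⟩ := huv
  by_cases he₁ : e₁ = e
  · subst he₁
    exact Or.inr (reach_glue_endpoint he hj)
  by_cases hC : e₁ ∈ Cluster ends oriented s ω
  · exact Or.inl (reach_of_mem_cluster hC hj)
  by_cases hp₁ : p e₁ = 1
  · rcases hu with hu | hu
    · exact absurd ⟨eq_true_of_le hF (by simp [forcedOpen, hp₁]), entered_of_joins hu hj⟩ hC
    · exact Or.inr (hu.tail ⟨e₁, eq_true_of_le forcedOpen_le_glue (by simp [forcedOpen, hp₁]), hj⟩)
  have hbd : e₁ ∉ boundary ends oriented s (Cluster ends oriented s ω) := fun hb => by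
    simp [glue, he₁, hC, hp₁, hb] at hopen
  have hτ : τ e₁ = true := by simpa [glue, he₁, hC, hp₁, hbd] using hopen
  rcases hu with hu | hu
  · have hent := entered_of_joins hu hj
    exact absurd (mem_boundary_cluster.2 ⟨Bool.eq_false_iff.2 fun hω => hC ⟨hω, hent⟩, hent⟩) hbd
  · have hB₁ : e₁ ∉ B := fun h => hC (hB h)
    have hbdB : e₁ ∉ boundary ends oriented s B := fun h =>
      (boundary_subset_union hB h).elim hC hbd
    exact Or.inr (hu.tail ⟨e₁, by simp [glue, he₁, hB₁, hp₁, hbdB, hτ], hj⟩)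

lemma reach_glue_of_reach_glue_cluster {B : Set E} {ω τ : E → Bool} (hF : forcedOpen p ≤ ω)
    (hB : B ⊆ Cluster ends oriented s ω) (he : Entered ends oriented s (forcedOpen p) e) {x : V}
    (hx : Reach ends oriented (glue ends oriented s p e (Cluster ends oriented s ω) τ) s x)
    (hxω : ¬ Reach ends oriented ω s x) :
    Reach ends oriented (glue ends oriented s p e B τ) s x := by
  have hinv : ∀ v,
      Reach ends oriented (glue ends oriented s p e (Cluster ends oriented s ω) τ) s v →
      Reach ends oriented ω s v ∨ Reach ends oriented (glue ends oriented s p e B τ) s v := by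
    intro v hv
    induction hv with
    | refl => exact Or.inl .refl
    | tail _ hst ih => exact reach_glue_step hF hB he ih hst
  exact (hinv x hx).resolve_left hxω

lemma dependsOn_glue (R : Set (E → Bool)) (B : Set E) :
    DependsOn (fun τ => R.indicator (1 : (E → Bool) → ℝ) (glue ends oriented s p e B τ))
      (B ∪ boundary ends oriented s B)ᶜ := by
  intro τ τ' hagree
  have : glue ends oriented s p e B τ = glue ends oriented s p e B τ' := funext fun e' => by
    unfold glue
    split_ifs with h₁ h₂
    · rfl
    · rfl
    · exact hagree e' fun h => h.elim (fun hB => h₁ (Or.inr (Or.inl hB))) h₂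
  simp only [this]

lemma update_true_eq_glue [Fintype E] [DecidableEq E] {ω : E → Bool}
    (hw : weight (Function.update p e 0) ω ≠ 0) :
    Function.update ω e true = glue ends oriented s p e (Cluster ends oriented s ω) ω := by
  funext e'
  by_cases h₁ : e' = e
  · subst h₁; simp [glue]
  have hup : Function.update p e 0 e' = p e' := Function.update_of_ne h₁ _ _
  by_cases h₂ : e' ∈ Cluster ends oriented s ω
  · simp [glue, h₁, h₂, h₂.1]
  by_cases h₃ : p e' = 1
  · simp [glue, h₁, h₃, eq_true_of_weight_ne_zero hw (hup.trans h₃)]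
  simp only [glue, h₁, h₂, h₃, Function.update_of_ne h₁, or_self, if_false]
  split_ifs with hb
  · exact (mem_boundary_cluster.1 hb).1
  · rfl

lemma cluster_eq_of_weight_ne_zero [Fintype E] (hp : ∀ e, 0 ≤ p e ∧ p e ≤ 1)
    (hdet : ∀ e, 0 < p e → p e < 1 → ¬ Entered ends oriented s (forcedOpen p) e) {ω : E → Bool}
    (hw : weight p ω ≠ 0) :
    Cluster ends oriented s ω = Cluster ends oriented s (forcedOpen p) := by
  have hF : forcedOpen p ≤ ω := fun e => Bool.le_iff_imp.2 fun h =>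
    eq_true_of_weight_ne_zero hw (by simpa [forcedOpen] using h)
  refine cluster_eq_of_entered hF fun e hopen hent => ?_
  rcases (hp e).1.eq_or_lt with h0 | hpos
  · simp [eq_false_of_weight_ne_zero hw h0.symm] at hopen
  rcases (hp e).2.eq_or_lt with h1 | hlt
  · simp [forcedOpen, h1]
  · exact absurd hent (hdet e hpos hlt)

end Coupling

section Surrogate

variable [Fintype E] [DecidableEq E] {ends : E → V × V} {oriented : E → Bool} {s : V}
  {X : Set V} {p : E → ℝ} {e : E}

/-- The probability that the cluster still avoids `X` once `e` is opened, with `B` open, its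
boundary closed and the other edges resampled.  The implication makes it `1` when `B` itself
reaches `X`, which keeps it monotone in `B`. -/
noncomputable def avoidProb (ends : E → V × V) (oriented : E → Bool) (s : V) (X : Set V)
    (p : E → ℝ) (e : E) (B : Set E) : ℝ :=
  Pr (Function.update p e 0) {τ | openOn B ∈ RX ends oriented s X →
    glue ends oriented s p e B τ ∈ RX ends oriented s X}

/-- Stands in for the indicator of `{ω | Function.update ω e true ∈ R_X}`.  Adding the edges of
probability one makes it increasing; almost surely they already lie in the cluster. -/
noncomputable def clusterAvoidProb (ends : E → V × V) (oriented : E → Bool) (s : V)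
    (X : Set V) (p : E → ℝ) (e : E) (ω : E → Bool) : ℝ :=
  avoidProb ends oriented s X p e
    (Cluster ends oriented s (openOn (Cluster ends oriented s ω) ⊔ forcedOpen p))

lemma clusterAvoidProb_increasing (hp : ∀ e, 0 ≤ p e ∧ p e ≤ 1)
    (he : Entered ends oriented s (forcedOpen p) e) :
    IncreasingInCluster ends oriented s (clusterAvoidProb ends oriented s X p e) := by
  intro ω ω' h
  have hle : openOn (Cluster ends oriented s ω) ⊔ forcedOpen p ≤
      openOn (Cluster ends oriented s ω') ⊔ forcedOpen p :=
    sup_le_sup_right (openOn_mono h) _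
  refine Pr_mono (update_bounds hp e ⟨le_rfl, zero_le_one⟩) fun τ hτ hR' => ?_
  have hR := RX_antitone (openOn_mono (cluster_mono hle)) hR'
  intro x hx hreach
  refine hτ hR x hx (reach_glue_of_reach_glue_cluster le_sup_right (cluster_mono hle) he hreach ?_)
  exact reach_openOn_cluster_iff.not.1 (hR' x hx)

lemma clusterAvoidProb_eq (hpe : p e ≠ 1) {ω : E → Bool}
    (hw : weight (Function.update p e 0) ω ≠ 0) (hR : ω ∈ RX ends oriented s X) :
    clusterAvoidProb ends oriented s X p e ω =
      Pr (Function.update p e 0) {τ | glue ends oriented s p e (Cluster ends oriented s ω) τ ∈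
        RX ends oriented s X} := by
  have hF : forcedOpen p ≤ ω := fun e' => Bool.le_iff_imp.2 fun h => by
    have h₁ : p e' = 1 := by simpa [forcedOpen] using h
    have hne : e' ≠ e := fun h' => hpe (h' ▸ h₁)
    exact eq_true_of_weight_ne_zero hw (by rw [Function.update_of_ne hne, h₁])
  simp only [clusterAvoidProb, avoidProb, cluster_openOn_cluster_sup hF,
    mem_RX_iff_openOn_cluster.1 hR, true_imp_iff]

/-- Conditionally on the cluster of `s`, the edges off the cluster and its boundary are
distributed according to the product measure. -/
lemma expect_resample_off_cluster {Ψ : (E → Bool) → ℝ}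
    (hΨ : Function.FactorsThrough Ψ (Cluster ends oriented s)) (h : Set E → (E → Bool) → ℝ)
    (hh : ∀ C, DependsOn (h C) (C ∪ boundary ends oriented s C)ᶜ) :
    expect p (fun ω => Ψ ω * h (Cluster ends oriented s ω) ω) =
      expect p (fun ω => Ψ ω * expect p (h (Cluster ends oriented s ω))) := by
  have hfiber : ∀ G : Set E → (E → Bool) → ℝ,
      expect p (fun ω => Ψ ω * G (Cluster ends oriented s ω) ω) =
        ∑ C, expect p (fun ω => (if Cluster ends oriented s ω = C then Ψ ω else 0) * G C ω) := by
    intro G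
    simp only [expect]
    rw [Finset.sum_comm]
    refine Finset.sum_congr rfl fun ω _ => ?_
    simp [ite_mul]
  rw [hfiber h, hfiber fun C _ => expect p (h C)]
  refine Finset.sum_congr rfl fun C _ => ?_
  have hdep : DependsOn (fun ω => if Cluster ends oriented s ω = C then Ψ ω else 0)
      (C ∪ boundary ends oriented s C) := by
    intro ω ω' hagree
    have hiff : (Cluster ends oriented s ω = C) = (Cluster ends oriented s ω' = C) :=
      dependsOn_cluster_eq C hagree
    by_cases hω : Cluster ends oriented s ω = C
    · have hω' : Cluster ends oriented s ω' = C := hiff ▸ hω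
      simp only [hω, hω', if_true, hΨ (hω.trans hω'.symm)]
    · have hω' : ¬ Cluster ends oriented s ω' = C := hiff ▸ hω
      simp only [hω, hω', if_false]
  rw [expect_mul_of_dependsOn _ hdep (hh C), expect, expect, Finset.sum_mul]
  exact Finset.sum_congr rfl fun ω _ => by ring

lemma expect_indicator_update_true {φ : (E → Bool) → ℝ}
    (hφ : Function.FactorsThrough φ (Cluster ends oriented s)) (hpe : p e ≠ 1) :
    expect (Function.update p e 0)
        (((fun ω => Function.update ω e true) ⁻¹' RX ends oriented s X).indicator φ) =
      expect (Function.update p e 0) ((RX ends oriented s X).indicator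
        fun ω => φ ω * clusterAvoidProb ends oriented s X p e ω) := by
  have key := expect_resample_off_cluster (p := Function.update p e 0)
    (factorsThrough_indicator_RX (X := X) hφ)
    (fun C τ => (RX ends oriented s X).indicator 1 (glue ends oriented s p e C τ))
    fun C => dependsOn_glue _ C
  convert key using 1 <;> refine expect_congr_of_weight_ne_zero fun ω hw => ?_
  · rw [← update_true_eq_glue hw]
    by_cases h : Function.update ω e true ∈ RX ends oriented s X
    · have hω : ω ∈ RX ends oriented s X := RX_antitone (fun e' => by
        by_cases he' : e' = e <;> simp [he']) h
      simp [h, hω]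
    · simp [Set.indicator_apply, h]
  · by_cases hω : ω ∈ RX ends oriented s X
    · simp only [Set.indicator_of_mem hω, clusterAvoidProb_eq hpe hw hω, Pr_eq_expect]
      congr 2
    · simp [hω]

end Surrogate

section FKG

variable [Fintype E] [DecidableEq E] {ends : E → V × V} {oriented : E → Bool} {s : V}
  {X : Set V} {p : E → ℝ}

/-- `E[f g | R_X] ≥ E[f | R_X] E[g | R_X]` with the normalisations multiplied out. -/
def ClusterFKG (ends : E → V × V) (oriented : E → Bool) (s : V) (X : Set V) (p : E → ℝ) :
    Prop :=
  ∀ f g : (E → Bool) → ℝ, IncreasingInCluster ends oriented s f →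
    IncreasingInCluster ends oriented s g →
    expect p ((RX ends oriented s X).indicator f) * expect p ((RX ends oriented s X).indicator g) ≤
      expect p ((RX ends oriented s X).indicator fun ω => f ω * g ω) *
        expect p ((RX ends oriented s X).indicator 1)

/-- `E[f | R_X]` increases when `e` is opened: with `e` closed, the event that opening `e` keeps
`R_X` is replaced by the increasing function `clusterAvoidProb`, which is positively
correlated with `f` by the induction hypothesis. -/
lemma expect_ratio_update_zero_le_update_one (hp : ∀ e, 0 ≤ p e ∧ p e ≤ 1) {e : E}
    (hpe : p e ≠ 1) (he : Entered ends oriented s (forcedOpen p) e)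
    (h₀ : ClusterFKG ends oriented s X (Function.update p e 0)) {f : (E → Bool) → ℝ}
    (hf : IncreasingInCluster ends oriented s f) :
    expect (Function.update p e 0) ((RX ends oriented s X).indicator f) *
        expect (Function.update p e 1) ((RX ends oriented s X).indicator 1) ≤
      expect (Function.update p e 1) ((RX ends oriented s X).indicator f) *
        expect (Function.update p e 0) ((RX ends oriented s X).indicator 1) := by
  have hp₀ := update_bounds hp e (q := 0) ⟨le_rfl, zero_le_one⟩
  have hup : ∀ ω : E → Bool, ω ≤ Function.update ω e true := fun ω e' => by
    by_cases he' : e' = e <;> simp [he']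
  have hZ : expect (Function.update p e 1) ((RX ends oriented s X).indicator 1) =
      expect (Function.update p e 0)
        ((RX ends oriented s X).indicator (clusterAvoidProb ends oriented s X p e)) := by
    rw [expect_update_one]
    convert expect_indicator_update_true (ends := ends) (oriented := oriented) (s := s) (X := X)
      (φ := 1) (fun _ _ _ => rfl) hpe using 2
    · funext ω
      simp [Set.indicator_apply]
    · simp
  have hfg : expect (Function.update p e 0) ((RX ends oriented s X).indicator
        fun ω => f ω * clusterAvoidProb ends oriented s X p e ω) ≤
      expect (Function.update p e 1) ((RX ends oriented s X).indicator f) := by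
    rw [← expect_indicator_update_true hf.factorsThrough hpe, expect_update_one]
    refine expect_mono hp₀ fun ω => ?_
    by_cases h : Function.update ω e true ∈ RX ends oriented s X
    · simpa [Set.indicator_apply, h] using hf _ _ (cluster_mono (hup ω))
    · simp [h]
  rw [hZ]
  exact (h₀ f _ hf (clusterAvoidProb_increasing hp he)).trans
    (mul_le_mul_of_nonneg_right hfg
      (expect_nonneg hp₀ (Set.indicator_nonneg fun _ _ => zero_le_one)))

lemma mixture_mul_le {a b F₀ F₁ G₀ G₁ H₀ H₁ Z₀ Z₁ : ℝ} (ha : 0 ≤ a) (hb : 0 ≤ b)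
    (hZ₀ : 0 ≤ Z₀) (hZ₁ : 0 ≤ Z₁) (h₀ : F₀ * G₀ ≤ H₀ * Z₀) (h₁ : F₁ * G₁ ≤ H₁ * Z₁)
    (hF : F₀ * Z₁ ≤ F₁ * Z₀) (hG : G₀ * Z₁ ≤ G₁ * Z₀)
    (hv₀ : Z₀ = 0 → F₀ = 0 ∧ G₀ = 0 ∧ H₀ = 0) (hv₁ : Z₁ = 0 → F₁ = 0 ∧ G₁ = 0 ∧ H₁ = 0) :
    (a * F₁ + b * F₀) * (a * G₁ + b * G₀) ≤ (a * H₁ + b * H₀) * (a * Z₁ + b * Z₀) := by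
  have hcross : F₁ * G₀ + F₀ * G₁ ≤ H₁ * Z₀ + H₀ * Z₁ := by
    rcases hZ₀.eq_or_lt with h | hpos₀
    · obtain ⟨rfl, rfl, rfl⟩ := hv₀ h.symm
      simp [← h]
    rcases hZ₁.eq_or_lt with h | hpos₁
    · obtain ⟨rfl, rfl, rfl⟩ := hv₁ h.symm
      simp [← h]
    -- Multiplied by `Z₀ Z₁`, the gap is `Z₀² (H₁ Z₁ - F₁ G₁) + Z₁² (H₀ Z₀ - F₀ G₀)`
    -- `+ (F₁ Z₀ - F₀ Z₁) (G₁ Z₀ - G₀ Z₁) ≥ 0`.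
    refine le_of_mul_le_mul_right ?_ (mul_pos hpos₀ hpos₁)
    nlinarith [mul_nonneg (sub_nonneg.2 hF) (sub_nonneg.2 hG),
      mul_le_mul_of_nonneg_right h₀ (mul_nonneg hZ₁ hZ₁),
      mul_le_mul_of_nonneg_right h₁ (mul_nonneg hZ₀ hZ₀)]
  nlinarith [mul_le_mul_of_nonneg_left h₁ (mul_nonneg ha ha),
    mul_le_mul_of_nonneg_left h₀ (mul_nonneg hb hb),
    mul_le_mul_of_nonneg_left hcross (mul_nonneg ha hb)]

lemma clusterFKG_of_update (hp : ∀ e, 0 ≤ p e ∧ p e ≤ 1) {e : E} (hpe : 0 < p e ∧ p e < 1)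
    (he : Entered ends oriented s (forcedOpen p) e)
    (h₀ : ClusterFKG ends oriented s X (Function.update p e 0))
    (h₁ : ClusterFKG ends oriented s X (Function.update p e 1)) :
    ClusterFKG ends oriented s X p := by
  intro f g hf hg
  have hp₀ := update_bounds hp e (q := 0) ⟨le_rfl, zero_le_one⟩
  have hp₁ := update_bounds hp e (q := 1) ⟨zero_le_one, le_rfl⟩
  have hnonneg : ∀ q : E → ℝ, (∀ e, 0 ≤ q e ∧ q e ≤ 1) →
      0 ≤ expect q ((RX ends oriented s X).indicator 1) := fun q hq =>
    expect_nonneg hq (Set.indicator_nonneg fun _ _ => zero_le_one)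
  have hvanish : ∀ q : E → ℝ, (∀ e, 0 ≤ q e ∧ q e ≤ 1) →
      expect q ((RX ends oriented s X).indicator 1) = 0 →
        expect q ((RX ends oriented s X).indicator f) = 0 ∧
        expect q ((RX ends oriented s X).indicator g) = 0 ∧
        expect q ((RX ends oriented s X).indicator fun ω => f ω * g ω) = 0 := fun q hq h =>
    ⟨expect_indicator_eq_zero hq h _, expect_indicator_eq_zero hq h _,
      expect_indicator_eq_zero hq h _⟩
  rw [expect_eq_add_update (p := p) e, expect_eq_add_update (p := p) e,
    expect_eq_add_update (p := p) e, expect_eq_add_update (p := p) e]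
  exact mixture_mul_le hpe.1.le (sub_nonneg.2 hpe.2.le) (hnonneg _ hp₀) (hnonneg _ hp₁)
    (h₀ f g hf hg) (h₁ f g hf hg) (expect_ratio_update_zero_le_update_one hp hpe.2.ne he h₀ hf)
    (expect_ratio_update_zero_le_update_one hp hpe.2.ne he h₀ hg) (hvanish _ hp₀) (hvanish _ hp₁)

lemma clusterFKG_of_deterministic (hp : ∀ e, 0 ≤ p e ∧ p e ≤ 1)
    (hdet : ∀ e, 0 < p e → p e < 1 → ¬ Entered ends oriented s (forcedOpen p) e) :
    ClusterFKG ends oriented s X p := by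
  intro f g hf hg
  have hconst : ∀ φ : (E → Bool) → ℝ, Function.FactorsThrough φ (Cluster ends oriented s) →
      expect p ((RX ends oriented s X).indicator φ) =
        (RX ends oriented s X).indicator φ (forcedOpen p) := fun φ hφ =>
    (expect_congr_of_weight_ne_zero fun ω hw =>
      factorsThrough_indicator_RX hφ (cluster_eq_of_weight_ne_zero hp hdet hw)).trans
      (expect_const _ _)
  have hfg : Function.FactorsThrough (fun ω => f ω * g ω) (Cluster ends oriented s) :=
    fun ω ω' h => show f ω * g ω = f ω' * g ω' by rw [hf.factorsThrough h, hg.factorsThrough h]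
  rw [hconst f hf.factorsThrough, hconst g hg.factorsThrough, hconst _ hfg,
    hconst 1 fun _ _ _ => rfl]
  by_cases hR : forcedOpen p ∈ RX ends oriented s X <;> simp [hR]

noncomputable def randomEdges (p : E → ℝ) : Finset E :=
  Finset.univ.filter fun e => 0 < p e ∧ p e < 1

lemma card_randomEdges_update_lt {e : E} (he : 0 < p e ∧ p e < 1) {q : ℝ}
    (hq : q = 0 ∨ q = 1) : (randomEdges (Function.update p e q)).card < (randomEdges p).card := by
  refine Finset.card_lt_card ⟨fun e' he' => ?_, fun hsub => ?_⟩
  · by_cases h : e' = e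
    · subst h; simpa [randomEdges] using he
    · simpa [randomEdges, h] using he'
  · have := hsub (by simpa [randomEdges] using he)
    rcases hq with rfl | rfl <;> simp [randomEdges] at this

end FKG

theorem clusterFKG [Fintype E] [DecidableEq E] {ends : E → V × V} {oriented : E → Bool} {s : V}
    {X : Set V} {p : E → ℝ} (hp : ∀ e, 0 ≤ p e ∧ p e ≤ 1) : ClusterFKG ends oriented s X p := by
  by_cases h : ∃ e, (0 < p e ∧ p e < 1) ∧ Entered ends oriented s (forcedOpen p) e
  · obtain ⟨e, hpe, he⟩ := h
    exact clusterFKG_of_update hp hpe he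
      (clusterFKG (update_bounds hp e ⟨le_rfl, zero_le_one⟩))
      (clusterFKG (update_bounds hp e ⟨zero_le_one, le_rfl⟩))
  · exact clusterFKG_of_deterministic hp fun e h₀ h₁ he => h ⟨e, ⟨h₀, h₁⟩, he⟩
termination_by (randomEdges p).card
decreasing_by
  · exact card_randomEdges_update_lt hpe (Or.inl rfl)
  · exact card_randomEdges_update_lt hpe (Or.inr rfl)

theorem stmt14_general [Fintype E] [DecidableEq E]
    (ends : E → V × V) (oriented : E → Bool)
    (p : E → ℝ) (hp : ∀ e, 0 ≤ p e ∧ p e ≤ 1)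
    (s : V) (X : Set V)
    (hpos : 0 < Pr p (RX ends oriented s X))
    (f g : (E → Bool) → ℝ)
    (hf : ∀ ω ω',
      Cluster ends oriented s ω ⊆ Cluster ends oriented s ω' → f ω ≤ f ω')
    (hg : ∀ ω ω',
      Cluster ends oriented s ω ⊆ Cluster ends oriented s ω' → g ω ≤ g ω') :
    condExp p (fun ω => f ω * g ω) (RX ends oriented s X) ≥
      condExp p f (RX ends oriented s X) *
        condExp p g (RX ends oriented s X) := by
  have hfkg := clusterFKG (X := X) hp f g hf hg
  rw [← Pr_eq_expect] at hfkg
  rw [ge_iff_le, condExp_eq, condExp_eq, condExp_eq, div_mul_div_comm,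
    div_le_div_iff₀ (mul_pos hpos hpos) hpos]
  exact (mul_le_mul_of_nonneg_right hfkg hpos.le).trans_eq (mul_assoc _ _ _)

/-- Theorem 3.2. If `X ⊆ V \ {s}` with `Pr(R_X) > 0` and
`f`, `g` are bounded increasing functions of the open cluster `C_s`, then
`E[f·g | R_X] ≥ E[f | R_X] · E[g | R_X]`. -/
theorem stmt14 [Fintype V] [Fintype E] [DecidableEq E]
    (ends : E → V × V) (oriented : E → Bool)
    (p : E → ℝ) (hp : ∀ e, 0 ≤ p e ∧ p e ≤ 1)
    (s : V) (X : Set V) (hX : s ∉ X)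
    (hpos : 0 < Pr p (RX ends oriented s X))
    (f g : (E → Bool) → ℝ)
    (hfb : ∃ M, ∀ ω, |f ω| ≤ M) (hgb : ∃ M, ∀ ω, |g ω| ≤ M)
    (hf : ∀ ω ω',
      Cluster ends oriented s ω ⊆ Cluster ends oriented s ω' → f ω ≤ f ω')
    (hg : ∀ ω ω',
      Cluster ends oriented s ω ⊆ Cluster ends oriented s ω' → g ω ≤ g ω') :
    condExp p (fun ω => f ω * g ω) (RX ends oriented s X) ≥
      condExp p f (RX ends oriented s X) *
        condExp p g (RX ends oriented s X) :=
  stmt14_general ends oriented p hp s X hpos f g hf hg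

end MixedPerc
end
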